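/- arXiv:1603.06723 — 3 statements merged into one kernel-verified Lean document; each statement's English description precedes it below -/
import Mathlib

section
/- Let m ≥ 1 and let K ⊆ ℝ^m be a strictly convex body. Then for every nonzero vector w ∈ ℝ^m there exists exactly one affine diameter of K in direction w; i.e., there is a unique line L parallel to w such that diam(K ∩ L) ≥ diam(K ∩ L') for every line L' parallel to w. -/
/-- `L` is a line in `ℝ^m` parallel to the (nonzero) vector `w`. -/
def IsLineParallel {m : ℕ} (w : EuclideanSpace ℝ (Fin m))
    (L : Set (EuclideanSpace ℝ (Fin m))) : Prop :=
  ∃ v : EuclideanSpace ℝ (Fin m), L = {p | ∃ t : ℝ, p = v + t • w}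

/-- `L` is an affine diameter of `K` in direction `w`: a line parallel to `w` whose
chord `K ∩ L` has maximal length among all lines parallel to `w`. -/
def IsAffineDiameter {m : ℕ} (K : Set (EuclideanSpace ℝ (Fin m)))
    (w : EuclideanSpace ℝ (Fin m)) (L : Set (EuclideanSpace ℝ (Fin m))) : Prop :=
  IsLineParallel w L ∧
    ∀ L', IsLineParallel w L' → Metric.diam (K ∩ L') ≤ Metric.diam (K ∩ L)

/-- Two lines parallel to `w` that share a point are equal. -/
lemma lineParallel_eq_of_mem {m : ℕ} {w : EuclideanSpace ℝ (Fin m)}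
    {L L' : Set (EuclideanSpace ℝ (Fin m))} (hL : IsLineParallel w L)
    (hL' : IsLineParallel w L') {p : EuclideanSpace ℝ (Fin m)}
    (hp : p ∈ L) (hp' : p ∈ L') : L = L' := by
  have aux : ∀ M : Set (EuclideanSpace ℝ (Fin m)), IsLineParallel w M → ∀ q ∈ M,
      M = {r | ∃ t : ℝ, r = q + t • w} := by
    rintro M ⟨v, rfl⟩ q ⟨t0, rfl⟩
    ext r
    constructor
    · rintro ⟨t, rfl⟩
      exact ⟨t - t0, by rw [sub_smul]; abel⟩
    · rintro ⟨t, rfl⟩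
      exact ⟨t0 + t, by rw [add_smul]; abel⟩
  rw [aux L hL p hp, aux L' hL' p hp']

lemma dist_line_param {m : ℕ} (v w : EuclideanSpace ℝ (Fin m)) (s t : ℝ) :
    dist (v + s • w) (v + t • w) = |s - t| * ‖w‖ := by
  rw [dist_eq_norm, add_sub_add_left_eq_sub, ← sub_smul, norm_smul, Real.norm_eq_abs]

/-- A strictly convex body in `ℝ^m` has exactly one affine diameter in every
direction `w ≠ 0`. -/
theorem existsUnique_affineDiameter_of_strictConvex
    (m : ℕ) (hm : 1 ≤ m) (K : Set (EuclideanSpace ℝ (Fin m)))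
    (hKcomp : IsCompact K) (hKconv : Convex ℝ K) (hKint : (interior K).Nonempty)
    (hKstrict : StrictConvex ℝ K)
    (w : EuclideanSpace ℝ (Fin m)) (hw : w ≠ 0) :
    ∃! L : Set (EuclideanSpace ℝ (Fin m)), IsAffineDiameter K w L := by
  obtain ⟨x0, hx0⟩ := hKint
  have hx0K : x0 ∈ K := interior_subset hx0
  have hwnorm : (0 : ℝ) < ‖w‖ := norm_pos_iff.mpr hw
  obtain ⟨R, hR⟩ := hKcomp.isBounded.subset_closedBall 0
  have hRmem : ∀ x ∈ K, ‖x‖ ≤ R := fun x hx => by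
    simpa [Metric.mem_closedBall] using hR hx
  -- the set of "chord lengths" in direction `w`
  set D : Set (EuclideanSpace ℝ (Fin m)) :=
    (fun p : EuclideanSpace ℝ (Fin m) × EuclideanSpace ℝ (Fin m) => p.1 - p.2) '' (K ×ˢ K)
    with hDdef
  have hDcomp : IsCompact D := (hKcomp.prod hKcomp).image (continuous_fst.sub continuous_snd)
  set S : Set ℝ := {t : ℝ | t • w ∈ D} with hSdef
  have hmemS : ∀ t : ℝ, t ∈ S ↔ ∃ x ∈ K, ∃ y ∈ K, x - y = t • w := by
    intro t
    simp only [hSdef, Set.mem_setOf_eq, hDdef, Set.mem_image, Set.mem_prod, Prod.exists]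
    constructor
    · rintro ⟨x, y, ⟨hx, hy⟩, h⟩; exact ⟨x, hx, y, hy, h⟩
    · rintro ⟨x, hx, y, hy, h⟩; exact ⟨x, y, ⟨hx, hy⟩, h⟩
  have hSclosed : IsClosed S := by
    have : S = (fun t : ℝ => t • w) ⁻¹' D := rfl
    rw [this]
    exact hDcomp.isClosed.preimage (continuous_id.smul continuous_const)
  have hSsub : S ⊆ Set.Icc (-(2 * R / ‖w‖)) (2 * R / ‖w‖) := by
    intro t ht
    obtain ⟨x, hx, y, hy, hxy⟩ := (hmemS t).mp ht
    have h1 : ‖t • w‖ ≤ 2 * R := by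
      rw [← hxy]
      calc ‖x - y‖ ≤ ‖x‖ + ‖y‖ := norm_sub_le x y
        _ ≤ R + R := add_le_add (hRmem x hx) (hRmem y hy)
        _ = 2 * R := by ring
    rw [norm_smul, Real.norm_eq_abs] at h1
    have h2 : |t| ≤ 2 * R / ‖w‖ := by
      rw [le_div_iff₀ hwnorm]; exact h1
    exact abs_le.mp h2
  have hScomp : IsCompact S := IsCompact.of_isClosed_subset isCompact_Icc hSclosed hSsub
  have h0S : (0 : ℝ) ∈ S := (hmemS 0).mpr ⟨x0, hx0K, x0, hx0K, by simp⟩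
  have hSne : S.Nonempty := ⟨0, h0S⟩
  set T : ℝ := sSup S with hTdef
  have hTS : T ∈ S := hScomp.sSup_mem hSne
  have hle : ∀ t ∈ S, t ≤ T := fun t ht => le_csSup hScomp.bddAbove ht
  -- T is positive
  obtain ⟨r, hr, hball⟩ := Metric.isOpen_iff.mp isOpen_interior x0 hx0
  have hT0 : 0 < T := by
    set e : ℝ := r / (2 * ‖w‖) with hedef
    have he : 0 < e := by positivity
    have hmem : x0 + e • w ∈ K := by
      apply interior_subset
      apply hball
      rw [Metric.mem_ball, dist_eq_norm, add_sub_cancel_left, norm_smul, Real.norm_eq_abs,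
        abs_of_pos he]
      have he2 : e * (2 * ‖w‖) = r := by
        rw [hedef]; field_simp
      nlinarith [mul_pos he hwnorm]
    have heS : e ∈ S := (hmemS e).mpr ⟨x0 + e • w, hmem, x0, hx0K, by abel⟩
    exact lt_of_lt_of_le he (hle e heS)
  -- every chord has length at most T * ‖w‖
  have key : ∀ L, IsLineParallel w L → Metric.diam (K ∩ L) ≤ T * ‖w‖ := by
    rintro L ⟨v, rfl⟩
    apply Metric.diam_le_of_forall_dist_le (by positivity)
    rintro a ⟨haK, s, rfl⟩ b ⟨hbK, t, rfl⟩
    rw [dist_line_param]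
    have h1 : s - t ∈ S := (hmemS _).mpr ⟨v + s • w, haK, v + t • w, hbK,
      by rw [sub_smul]; abel⟩
    have h2 : t - s ∈ S := (hmemS _).mpr ⟨v + t • w, hbK, v + s • w, haK,
      by rw [sub_smul]; abel⟩
    have : |s - t| ≤ T := abs_le.mpr ⟨by linarith [hle _ h2], hle _ h1⟩
    exact mul_le_mul_of_nonneg_right this hwnorm.le
  -- the maximal chord is realized
  obtain ⟨x, hxK, y, hyK, hxy⟩ := (hmemS T).mp hTS
  set L0 : Set (EuclideanSpace ℝ (Fin m)) := {p | ∃ t : ℝ, p = y + t • w} with hL0def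
  have hL0 : IsLineParallel w L0 := ⟨y, rfl⟩
  have hyL0 : y ∈ L0 := ⟨0, by simp⟩
  have hxL0 : x ∈ L0 := ⟨T, by rw [← hxy]; abel⟩
  have hdL0 : Metric.diam (K ∩ L0) = T * ‖w‖ := by
    refine le_antisymm (key _ hL0) ?_
    have hb : Bornology.IsBounded (K ∩ L0) := hKcomp.isBounded.subset Set.inter_subset_left
    have := Metric.dist_le_diam_of_mem hb ⟨hxK, hxL0⟩ ⟨hyK, hyL0⟩
    have hd : dist x y = T * ‖w‖ := by
      rw [dist_eq_norm, hxy, norm_smul, Real.norm_eq_abs, abs_of_pos hT0]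
    linarith
  have hL0diam : IsAffineDiameter K w L0 :=
    ⟨hL0, fun L' hL' => by rw [hdL0]; exact key L' hL'⟩
  -- every affine diameter contains a chord of length exactly T * ‖w‖
  have chord : ∀ L, IsAffineDiameter K w L →
      ∃ a, a ∈ K ∧ a ∈ L ∧ a + T • w ∈ K ∧ a + T • w ∈ L := by
    rintro L ⟨⟨v, rfl⟩, hmax⟩
    have hdL : Metric.diam (K ∩ {p | ∃ t : ℝ, p = v + t • w}) = T * ‖w‖ :=
      le_antisymm (key _ ⟨v, rfl⟩) (hdL0 ▸ hmax L0 hL0)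
    set A : Set ℝ := {t : ℝ | v + t • w ∈ K} with hAdef
    have hAne : A.Nonempty := by
      by_contra hcon
      rw [Set.not_nonempty_iff_eq_empty] at hcon
      have : K ∩ {p | ∃ t : ℝ, p = v + t • w} = ∅ := by
        ext p
        simp only [Set.mem_inter_iff, Set.mem_setOf_eq, Set.mem_empty_iff_false, iff_false]
        rintro ⟨hpK, t, rfl⟩
        exact absurd hpK (Set.eq_empty_iff_forall_notMem.mp hcon t)
      rw [this, Metric.diam_empty] at hdL
      nlinarith
    have hAclosed : IsClosed A :=
      hKcomp.isClosed.preimage (continuous_const.add (continuous_id.smul continuous_const))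
    have hAsub : A ⊆ Set.Icc (-((R + ‖v‖) / ‖w‖)) ((R + ‖v‖) / ‖w‖) := by
      intro t ht
      have h1 : ‖t • w‖ ≤ R + ‖v‖ := by
        calc ‖t • w‖ = ‖(v + t • w) - v‖ := by rw [add_sub_cancel_left]
          _ ≤ ‖v + t • w‖ + ‖v‖ := norm_sub_le _ _
          _ ≤ R + ‖v‖ := add_le_add (hRmem _ ht) le_rfl
      rw [norm_smul, Real.norm_eq_abs] at h1
      exact abs_le.mp (by rw [le_div_iff₀ hwnorm]; exact h1)
    have hAcomp : IsCompact A := IsCompact.of_isClosed_subset isCompact_Icc hAclosed hAsub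
    set s0 : ℝ := sInf A with hs0def
    set t0 : ℝ := sSup A with ht0def
    have hs0A : s0 ∈ A := hAcomp.sInf_mem hAne
    have ht0A : t0 ∈ A := hAcomp.sSup_mem hAne
    have hs0t0 : s0 ≤ t0 := csInf_le_csSup hAne hAcomp.bddBelow hAcomp.bddAbove
    -- diam of chord equals (t0 - s0) * ‖w‖
    have hdiam : Metric.diam (K ∩ {p | ∃ t : ℝ, p = v + t • w}) = (t0 - s0) * ‖w‖ := by
      refine le_antisymm ?_ ?_
      · apply Metric.diam_le_of_forall_dist_le (mul_nonneg (by linarith) hwnorm.le)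
        rintro a ⟨haK, s, rfl⟩ b ⟨hbK, t, rfl⟩
        rw [dist_line_param]
        have hsA : s ∈ A := haK
        have htA : t ∈ A := hbK
        have hs1 := le_csSup hAcomp.bddAbove hsA
        have hs2 := csInf_le hAcomp.bddBelow hsA
        have ht1 := le_csSup hAcomp.bddAbove htA
        have ht2 := csInf_le hAcomp.bddBelow htA
        have : |s - t| ≤ t0 - s0 := abs_le.mpr ⟨by linarith, by linarith⟩
        exact mul_le_mul_of_nonneg_right this hwnorm.le
      · have hb : Bornology.IsBounded (K ∩ {p | ∃ t : ℝ, p = v + t • w}) :=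
          hKcomp.isBounded.subset Set.inter_subset_left
        have := Metric.dist_le_diam_of_mem hb
          (⟨ht0A, t0, rfl⟩ : v + t0 • w ∈ K ∩ {p | ∃ t : ℝ, p = v + t • w})
          (⟨hs0A, s0, rfl⟩ : v + s0 • w ∈ K ∩ {p | ∃ t : ℝ, p = v + t • w})
        rw [dist_line_param, abs_of_nonneg (by linarith : (0:ℝ) ≤ t0 - s0)] at this
        exact this
    have hTeq : t0 - s0 = T := by
      have := hdiam.symm.trans hdL
      exact mul_right_cancel₀ (ne_of_gt hwnorm) this
    refine ⟨v + s0 • w, hs0A, ⟨s0, rfl⟩, ?_, ⟨t0, by rw [← hTeq, sub_smul]; abel⟩⟩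
    have : v + s0 • w + T • w = v + t0 • w := by rw [← hTeq, sub_smul]; abel
    rw [this]
    exact ht0A
  refine ⟨L0, hL0diam, ?_⟩
  intro L hLdiam
  by_contra hne
  obtain ⟨a1, ha1K, ha1L, hb1K, hb1L⟩ := chord L hLdiam
  obtain ⟨a2, ha2K, ha2L, hb2K, hb2L⟩ := chord L0 hL0diam
  have hane : a1 ≠ a2 := fun h =>
    hne (lineParallel_eq_of_mem hLdiam.1 hL0 ha1L (h ▸ ha2L))
  have hbne : a1 + T • w ≠ a2 + T • w := fun h => hane (by
    have := add_right_cancel h; exact this)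
  have hmidA : (1/2 : ℝ) • a1 + (1/2 : ℝ) • a2 ∈ interior K :=
    hKstrict ha1K ha2K hane (by norm_num) (by norm_num) (by norm_num)
  have hmidB : (1/2 : ℝ) • (a1 + T • w) + (1/2 : ℝ) • (a2 + T • w) ∈ interior K :=
    hKstrict hb1K hb2K hbne (by norm_num) (by norm_num) (by norm_num)
  obtain ⟨r1, hr1, hball1⟩ := Metric.isOpen_iff.mp isOpen_interior _ hmidA
  obtain ⟨r2, hr2, hball2⟩ := Metric.isOpen_iff.mp isOpen_interior _ hmidB
  set e : ℝ := min r1 r2 / (2 * ‖w‖) with hedef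
  have he : 0 < e := by positivity
  have hew : ‖e • w‖ < min r1 r2 := by
    rw [norm_smul, Real.norm_eq_abs, abs_of_pos he]
    have he2 : e * (2 * ‖w‖) = min r1 r2 := by
      rw [hedef]; field_simp
    nlinarith [mul_pos he hwnorm]
  have hp : (1/2 : ℝ) • a1 + (1/2 : ℝ) • a2 - e • w ∈ K := by
    apply interior_subset
    apply hball1
    rw [Metric.mem_ball, dist_eq_norm]
    have : (1/2 : ℝ) • a1 + (1/2 : ℝ) • a2 - e • w - ((1/2 : ℝ) • a1 + (1/2 : ℝ) • a2)
        = -(e • w) := by abel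
    rw [this, norm_neg]
    exact lt_of_lt_of_le hew (min_le_left _ _)
  have hq : (1/2 : ℝ) • (a1 + T • w) + (1/2 : ℝ) • (a2 + T • w) + e • w ∈ K := by
    apply interior_subset
    apply hball2
    rw [Metric.mem_ball, dist_eq_norm]
    have : (1/2 : ℝ) • (a1 + T • w) + (1/2 : ℝ) • (a2 + T • w) + e • w
        - ((1/2 : ℝ) • (a1 + T • w) + (1/2 : ℝ) • (a2 + T • w)) = e • w := by abel
    rw [this]
    exact lt_of_lt_of_le hew (min_le_right _ _)
  have hTeS : T + 2 * e ∈ S := by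
    refine (hmemS _).mpr ⟨_, hq, _, hp, ?_⟩
    module
  have := hle _ hTeS
  linarith
end

section
/- Let m ≥ 1 and let K ⊆ ℝ^m be a strictly convex body. Define p : S^{m−1} → ℝ^m by letting p(w) be the unique point of the affine diameter of K in direction w that lies in the hyperplane w^⊥ orthogonal to w. Then p is continuous and satisfies p(−w) = p(w) for every w ∈ S^{m−1}. -/
open RealInnerProductSpace Pointwise Topology

set_option maxHeartbeats 1600000

/-- For a strictly convex body `K ⊆ ℝ^m`, the map sending a unit vector `w` to the
unique point of the affine diameter of `K` in direction `w` lying in the hyperplane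
`w^⊥` is continuous on the unit sphere and even: `p (-w) = p w`. -/
theorem continuous_even_affineDiameter_selection
    (m : ℕ) (hm : 1 ≤ m) (K : Set (EuclideanSpace ℝ (Fin m)))
    (hKcomp : IsCompact K) (hKconv : Convex ℝ K) (hKint : (interior K).Nonempty)
    (hKstrict : StrictConvex ℝ K)
    (p : EuclideanSpace ℝ (Fin m) → EuclideanSpace ℝ (Fin m))
    (hp : ∀ w : EuclideanSpace ℝ (Fin m), ‖w‖ = 1 →
      ∃ L, IsAffineDiameter K w L ∧ p w ∈ L ∧ ⟪p w, w⟫ = 0) :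
    ContinuousOn p (Metric.sphere (0 : EuclideanSpace ℝ (Fin m)) 1) ∧
      ∀ w : EuclideanSpace ℝ (Fin m), ‖w‖ = 1 → p (-w) = p w := by
  classical
  obtain ⟨x0, hx0⟩ := hKint
  have hx0K : x0 ∈ K := interior_subset hx0
  set C : Set (EuclideanSpace ℝ (Fin m)) := K - K with hCdef
  have hCconv : Convex ℝ C := hKconv.sub hKconv
  have hCcomp : IsCompact C := by
    have h : C = (fun q : (EuclideanSpace ℝ (Fin m)) × (EuclideanSpace ℝ (Fin m)) =>
        q.1 - q.2) '' (K ×ˢ K) := by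
      ext x
      simp only [hCdef, Set.mem_sub, Set.mem_image, Set.mem_prod, Prod.exists]
      exact ⟨fun ⟨a, ha, b, hb, h⟩ => ⟨a, b, ⟨ha, hb⟩, h⟩,
        fun ⟨a, b, ⟨ha, hb⟩, h⟩ => ⟨a, ha, b, hb, h⟩⟩
    rw [h]
    exact (hKcomp.prod hKcomp).image (continuous_fst.sub continuous_snd)
  have hCclosed : IsClosed C := hCcomp.isClosed
  obtain ⟨r, hr, hball⟩ : ∃ r > 0, Metric.ball x0 r ⊆ K := by
    rw [mem_interior_iff_mem_nhds] at hx0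
    exact Metric.mem_nhds_iff.1 hx0
  have hCnhds : C ∈ 𝓝 (0 : EuclideanSpace ℝ (Fin m)) := by
    rw [Metric.mem_nhds_iff]
    refine ⟨r, hr, fun y hy => ?_⟩
    have h1 : x0 + y ∈ K := by
      apply hball
      rw [Metric.mem_ball, dist_eq_norm]
      simpa using (by simpa [dist_eq_norm] using hy : ‖y‖ < r)
    have h2 := Set.sub_mem_sub h1 hx0K
    simpa using h2
  have habs : Absorbent ℝ C := absorbent_nhds_zero hCnhds
  have hvnb : Bornology.IsVonNBounded ℝ C := NormedSpace.isVonNBounded_of_isBounded ℝ hCcomp.isBounded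
  set d : EuclideanSpace ℝ (Fin m) → ℝ := fun w => (gauge C w)⁻¹ with hddef
  have hgpos : ∀ w : EuclideanSpace ℝ (Fin m), ‖w‖ = 1 → 0 < gauge C w := by
    intro w hw
    refine (gauge_pos habs hvnb).2 ?_
    intro h; rw [h] at hw; simp at hw
  have hdpos : ∀ w : EuclideanSpace ℝ (Fin m), ‖w‖ = 1 → 0 < d w :=
    fun w hw => inv_pos.2 (hgpos w hw)
  have hmemC : ∀ w : EuclideanSpace ℝ (Fin m), ‖w‖ = 1 → d w • w ∈ C := by
    intro w hw
    have h1 : gauge C (d w • w) = 1 := by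
      rw [hddef]
      rw [gauge_smul_of_nonneg (inv_nonneg.2 (gauge_nonneg w))]
      simp only [smul_eq_mul]
      exact inv_mul_cancel₀ (hgpos w hw).ne'
    have h2 := (gauge_le_one_iff_mem_closure hCconv hCnhds).1 (le_of_eq h1)
    rwa [hCclosed.closure_eq] at h2
  have hle : ∀ w : EuclideanSpace ℝ (Fin m), ‖w‖ = 1 → ∀ t : ℝ, t • w ∈ C → t ≤ d w := by
    intro w hw t ht
    rcases le_or_gt t 0 with h | h
    · exact h.trans (hdpos w hw).le
    · have h1 : gauge C (t • w) ≤ 1 := gauge_le_one_of_mem ht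
      rw [gauge_smul_of_nonneg h.le, smul_eq_mul] at h1
      have h2 := mul_le_mul_of_nonneg_right h1 (inv_nonneg.2 (hgpos w hw).le)
      rwa [mul_assoc, mul_inv_cancel₀ (hgpos w hw).ne', mul_one, one_mul] at h2
  have hEx : ∀ w : EuclideanSpace ℝ (Fin m), ‖w‖ = 1 →
      ∃ a, a ∈ K ∧ a + d w • w ∈ K := by
    intro w hw
    obtain ⟨x, hx, y, hy, hxy⟩ := Set.mem_sub.1 (hmemC w hw)
    refine ⟨y, hy, ?_⟩
    have : y + d w • w = x := by rw [← hxy]; abel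
    rw [this]; exact hx
  have hUniq : ∀ w : EuclideanSpace ℝ (Fin m), ‖w‖ = 1 → ∀ a₁ a₂,
      a₁ ∈ K → a₁ + d w • w ∈ K → a₂ ∈ K → a₂ + d w • w ∈ K → a₁ = a₂ := by
    intro w hw a₁ a₂ h₁ h₁' h₂ h₂'
    by_contra hne
    have hmid : (1/2 : ℝ) • a₁ + (1/2 : ℝ) • a₂ ∈ interior K :=
      hKstrict h₁ h₂ hne (by norm_num) (by norm_num) (by norm_num)
    obtain ⟨ε, hε, hballm⟩ : ∃ ε > 0,
        Metric.ball ((1/2 : ℝ) • a₁ + (1/2 : ℝ) • a₂) ε ⊆ K := by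
      rw [mem_interior_iff_mem_nhds] at hmid
      exact Metric.mem_nhds_iff.1 hmid
    have hmb : ((1/2 : ℝ) • a₁ + (1/2 : ℝ) • a₂) + d w • w ∈ K := by
      have h3 := hKconv h₁' h₂' (by norm_num : (0:ℝ) ≤ 1/2)
        (by norm_num : (0:ℝ) ≤ 1/2) (by norm_num)
      convert h3 using 1
      module
    have hma : ((1/2 : ℝ) • a₁ + (1/2 : ℝ) • a₂) - (ε/2) • w ∈ K := by
      apply hballm
      rw [Metric.mem_ball, dist_eq_norm]
      have h4 : ((1/2 : ℝ) • a₁ + (1/2 : ℝ) • a₂) - (ε/2) • w -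
          ((1/2 : ℝ) • a₁ + (1/2 : ℝ) • a₂) = -((ε/2) • w) := by module
      rw [h4, norm_neg, norm_smul, hw, Real.norm_eq_abs, mul_one,
        abs_of_pos (by linarith)]
      linarith
    have h5 : (d w + ε/2) • w ∈ C := by
      have h6 := Set.sub_mem_sub hmb hma
      convert h6 using 1
      module
    have h7 := hle w hw _ h5
    linarith
  have hlineclosed : ∀ v w : EuclideanSpace ℝ (Fin m),
      IsClosed {q : EuclideanSpace ℝ (Fin m) | ∃ t : ℝ, q = v + t • w} := by
    intro v w
    have h : {q : EuclideanSpace ℝ (Fin m) | ∃ t : ℝ, q = v + t • w} =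
        (fun q => q - v) ⁻¹' ((Submodule.span ℝ {w} : Submodule ℝ _) : Set _) := by
      ext q
      simp only [Set.mem_setOf_eq, Set.mem_preimage, SetLike.mem_coe,
        Submodule.mem_span_singleton]
      constructor
      · rintro ⟨t, rfl⟩; exact ⟨t, by abel⟩
      · rintro ⟨t, ht⟩; refine ⟨t, ?_⟩; rw [ht]; abel
    rw [h]
    exact (Submodule.closed_of_finiteDimensional _).preimage
      (continuous_id.sub continuous_const)
  have hupper : ∀ w : EuclideanSpace ℝ (Fin m), ‖w‖ = 1 →
      ∀ L', IsLineParallel w L' → Metric.diam (K ∩ L') ≤ d w := by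
    rintro w hw L' ⟨v, rfl⟩
    apply Metric.diam_le_of_forall_dist_le (hdpos w hw).le
    rintro x ⟨hxK, t, rfl⟩ y ⟨hyK, s, rfl⟩
    have hsub : (t - s) • w ∈ C := by
      have h := Set.sub_mem_sub hxK hyK
      convert h using 1
      module
    have hsub' : (s - t) • w ∈ C := by
      have h := Set.sub_mem_sub hyK hxK
      convert h using 1
      module
    have h1 := hle w hw _ hsub
    have h2 := hle w hw _ hsub'
    rw [dist_eq_norm]
    have h3 : (v + t • w) - (v + s • w) = (t - s) • w := by module
    rw [h3, norm_smul, hw, Real.norm_eq_abs, mul_one, abs_le]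
    constructor <;> linarith
  have hchar : ∀ w : EuclideanSpace ℝ (Fin m), ‖w‖ = 1 → ∀ a, a ∈ K →
      a + d w • w ∈ K → p w = a - (⟪a, w⟫ : ℝ) • w := by
    intro w hw a haK haK'
    obtain ⟨L, ⟨⟨v, rfl⟩, hmax⟩, hpL, hporth⟩ := hp w hw
    have hbddL : Bornology.IsBounded
        (K ∩ {q : EuclideanSpace ℝ (Fin m) | ∃ t : ℝ, q = v + t • w}) :=
      hKcomp.isBounded.subset Set.inter_subset_left
    have hbdda : Bornology.IsBounded
        (K ∩ {q : EuclideanSpace ℝ (Fin m) | ∃ t : ℝ, q = a + t • w}) :=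
      hKcomp.isBounded.subset Set.inter_subset_left
    have hlow : d w ≤ Metric.diam
        (K ∩ {q : EuclideanSpace ℝ (Fin m) | ∃ t : ℝ, q = a + t • w}) := by
      have hmem1 : a ∈ K ∩ {q : EuclideanSpace ℝ (Fin m) | ∃ t : ℝ, q = a + t • w} :=
        ⟨haK, ⟨0, by simp⟩⟩
      have hmem2 : a + d w • w ∈
          K ∩ {q : EuclideanSpace ℝ (Fin m) | ∃ t : ℝ, q = a + t • w} :=
        ⟨haK', ⟨d w, rfl⟩⟩
      have h1 := Metric.dist_le_diam_of_mem hbdda hmem2 hmem1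
      have h2 : dist (a + d w • w) a = d w := by
        rw [dist_eq_norm]
        have h3 : (a + d w • w) - a = d w • w := by module
        rw [h3, norm_smul, hw, Real.norm_eq_abs, mul_one, abs_of_pos (hdpos w hw)]
      rwa [h2] at h1
    have hdiam : Metric.diam
        (K ∩ {q : EuclideanSpace ℝ (Fin m) | ∃ t : ℝ, q = v + t • w}) = d w :=
      le_antisymm (hupper w hw _ ⟨v, rfl⟩) (hlow.trans (hmax _ ⟨a, rfl⟩))
    have hKLne : (K ∩ {q : EuclideanSpace ℝ (Fin m) | ∃ t : ℝ, q = v + t • w}).Nonempty := by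
      by_contra h
      rw [Set.not_nonempty_iff_eq_empty] at h
      rw [h, Metric.diam_empty] at hdiam
      exact absurd hdiam.symm (hdpos w hw).ne'
    have hKLcomp : IsCompact
        (K ∩ {q : EuclideanSpace ℝ (Fin m) | ∃ t : ℝ, q = v + t • w}) :=
      hKcomp.inter_right (hlineclosed v w)
    obtain ⟨⟨x, y⟩, hxy, hmaxon⟩ := (hKLcomp.prod hKLcomp).exists_isMaxOn
      (hKLne.prod hKLne)
      ((continuous_fst.dist continuous_snd).continuousOn)
    rw [isMaxOn_iff] at hmaxon
    simp only [Set.mem_prod] at hxy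
    have hdxy : dist x y = d w := by
      apply le_antisymm
      · rw [← hdiam]
        exact Metric.dist_le_diam_of_mem hbddL hxy.1 hxy.2
      · rw [← hdiam]
        apply Metric.diam_le_of_forall_dist_le dist_nonneg
        intro x' hx' y' hy'
        exact hmaxon (x', y') (Set.mk_mem_prod hx' hy')
    obtain ⟨hxK, tx, hx⟩ := hxy.1
    obtain ⟨hyK, ty, hy⟩ := hxy.2
    have habsxy : |tx - ty| = d w := by
      rw [dist_eq_norm, hx, hy] at hdxy
      have h3 : (v + tx • w) - (v + ty • w) = (tx - ty) • w := by module
      rwa [h3, norm_smul, hw, Real.norm_eq_abs, mul_one] at hdxy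
    have haL : ∃ ta : ℝ, a = v + ta • w := by
      rcases abs_cases (tx - ty) with ⟨he, _⟩ | ⟨he, _⟩
      · -- tx - ty = d w : y is the lower endpoint
        have h1 : (v + ty • w) + d w • w ∈ K := by
          have h2 : (v + ty • w) + d w • w = v + tx • w := by
            rw [← habsxy, he]; module
          rw [h2, ← hx]; exact hxK
        have := hUniq w hw a (v + ty • w) haK haK' (by rw [← hy]; exact hyK) h1
        exact ⟨ty, this⟩
      · -- -(tx - ty) = d w : x is the lower endpoint
        have h1 : (v + tx • w) + d w • w ∈ K := by
          have h2 : (v + tx • w) + d w • w = v + ty • w := by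
            rw [← habsxy, he]; module
          rw [h2, ← hy]; exact hyK
        have := hUniq w hw a (v + tx • w) haK haK' (by rw [← hx]; exact hxK) h1
        exact ⟨tx, this⟩
    obtain ⟨ta, hta⟩ := haL
    obtain ⟨tp, htp⟩ := hpL
    have hpw : p w = a + (tp - ta) • w := by
      rw [hta, htp]; module
    have horth2 : (⟪a, w⟫ : ℝ) + (tp - ta) = 0 := by
      have h := hporth
      rw [hpw] at h
      have h4 : (⟪a + (tp - ta) • w, w⟫ : ℝ) = ⟪a, w⟫ + (tp - ta) * (‖w‖ * ‖w‖) := by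
        rw [inner_add_left, real_inner_smul_left, real_inner_self_eq_norm_mul_norm]
      rw [h4, hw] at h
      linarith
    rw [hpw]
    have h5 : tp - ta = -(⟪a, w⟫ : ℝ) := by linarith
    rw [h5]
    module
  have hsymm : ∀ x ∈ C, -x ∈ C := by
    intro x hx
    obtain ⟨u, hu, v, hv, huv⟩ := Set.mem_sub.1 hx
    rw [← huv, neg_sub]
    exact Set.sub_mem_sub hv hu
  constructor
  · -- continuity
    intro w hws
    have hw : ‖w‖ = 1 := by simpa using hws
    have hdcontAt : Filter.Tendsto d (𝓝 w) (𝓝 (d w)) := by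
      exact ((continuous_gauge hCconv hCnhds).continuousAt.inv₀ (hgpos w hw).ne')
    show Filter.Tendsto p (nhdsWithin w (Metric.sphere 0 1)) (𝓝 (p w))
    refine Filter.tendsto_of_subseq_tendsto fun u hu => ?_
    obtain ⟨huw, hus⟩ := tendsto_nhdsWithin_iff.1 hu
    set A : EuclideanSpace ℝ (Fin m) → EuclideanSpace ℝ (Fin m) := fun w' =>
      if h : ∃ a, a ∈ K ∧ a + d w' • w' ∈ K then h.choose else x0 with hAdef
    have hAK : ∀ w', A w' ∈ K := by
      intro w'
      rw [hAdef]
      dsimp only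
      split
      · next h => exact h.choose_spec.1
      · exact hx0K
    have hAspec : ∀ w', ‖w'‖ = 1 → A w' ∈ K ∧ A w' + d w' • w' ∈ K := by
      intro w' hw'
      rw [hAdef]
      dsimp only
      rw [dif_pos (hEx w' hw')]
      exact (hEx w' hw').choose_spec
    obtain ⟨a, haK, φ, hφ, hA⟩ := hKcomp.tendsto_subseq (fun n => hAK (u n))
    refine ⟨φ, ?_⟩
    have hv : Filter.Tendsto (fun k => u (φ k)) Filter.atTop (𝓝 w) :=
      huw.comp hφ.tendsto_atTop
    have hvs : ∀ᶠ k in Filter.atTop, ‖u (φ k)‖ = 1 :=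
      (hφ.tendsto_atTop.eventually hus).mono (fun k hk => by simpa using hk)
    have hdten : Filter.Tendsto (fun k => d (u (φ k))) Filter.atTop (𝓝 (d w)) :=
      hdcontAt.comp hv
    have hA' : Filter.Tendsto (fun k => A (u (φ k))) Filter.atTop (𝓝 a) := hA
    have haK' : a + d w • w ∈ K := by
      refine hKcomp.isClosed.mem_of_tendsto (hA'.add (hdten.smul hv)) ?_
      exact hvs.mono fun k hk => (hAspec _ hk).2
    have hpwa : p w = a - (⟪a, w⟫ : ℝ) • w := hchar w hw a haK haK'
    have hpev : ∀ᶠ k in Filter.atTop, p (u (φ k)) =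
        A (u (φ k)) - (⟪A (u (φ k)), u (φ k)⟫ : ℝ) • u (φ k) :=
      hvs.mono fun k hk => hchar _ hk _ (hAspec _ hk).1 (hAspec _ hk).2
    have hten : Filter.Tendsto
        (fun k => A (u (φ k)) - (⟪A (u (φ k)), u (φ k)⟫ : ℝ) • u (φ k))
        Filter.atTop (𝓝 (a - (⟪a, w⟫ : ℝ) • w)) :=
      hA'.sub ((hA'.inner hv).smul hv)
    rw [hpwa]
    exact hten.congr' (hpev.mono fun k hk => hk.symm)
  · -- evenness
    intro w hw
    obtain ⟨a, haK, haK'⟩ := hEx w hw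
    have hwneg : ‖-w‖ = 1 := by rw [norm_neg]; exact hw
    have hdneg : d (-w) = d w := by
      rw [hddef]
      dsimp only
      rw [gauge_neg hsymm w]
    have h1 : p w = a - (⟪a, w⟫ : ℝ) • w := hchar w hw a haK haK'
    have h2 : p (-w) = (a + d w • w) - (⟪a + d w • w, -w⟫ : ℝ) • (-w) := by
      apply hchar (-w) hwneg (a + d w • w) haK'
      rw [hdneg]
      have h3 : (a + d w • w) + d w • (-w) = a := by module
      rw [h3]
      exact haK
    rw [h1, h2]
    have h4 : (⟪a + d w • w, -w⟫ : ℝ) = -(⟪a, w⟫ + d w) := by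
      rw [inner_neg_right, inner_add_left, real_inner_smul_left,
        real_inner_self_eq_norm_mul_norm, hw]
      ring
    rw [h4]
    module
end

section
/- Let m ≥ 2 and let K ⊆ ℝ^m be a convex body with 0 ∈ int(K). Then there exists a continuous map f : ℝP^{m−1} → ℝ^m with the following property: for every integer k ≥ 2, if f admits a k-multiplicity, then there exist k pairwise distinct linear hyperplanes H_1, …, H_k in ℝ^m (hyperplanes through the origin) such that m(H_1) = ⋯ = m(H_k). -/
open MeasureTheory RealInnerProductSpace

/-- The projectivization of a topological vector space carries the quotient topology
coming from the nonzero vectors. -/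
instance projectivizationTopology (K V : Type*) [DivisionRing K] [AddCommGroup V]
    [Module K V] [TopologicalSpace V] : TopologicalSpace (Projectivization K V) :=
  inferInstanceAs (TopologicalSpace (Quotient (projectivizationSetoid K V)))

/-- The center of mass of `K ∩ H` with respect to `(m-1)`-dimensional Hausdorff measure. -/
noncomputable def centerOfMass (m : ℕ) (K H : Set (EuclideanSpace ℝ (Fin m))) :
    EuclideanSpace ℝ (Fin m) :=
  ((μH[(m : ℝ) - 1] (K ∩ H)).toReal)⁻¹ • ∫ x in K ∩ H, x ∂(μH[(m : ℝ) - 1])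

/-- `H` is a linear hyperplane in `ℝ^m`, i.e. a hyperplane through the origin. -/
def IsLinearHyperplane {m : ℕ} (H : Set (EuclideanSpace ℝ (Fin m))) : Prop :=
  ∃ w : EuclideanSpace ℝ (Fin m), w ≠ 0 ∧ H = {x | ⟪x, w⟫ = 0}

open Metric Module Set Topology
open scoped NNReal ENNReal Pointwise

namespace CMass

variable {m : ℕ}

/-- the hyperplane orthogonal to `w` -/
def hyp (w : EuclideanSpace ℝ (Fin m)) : Set (EuclideanSpace ℝ (Fin m)) := {x | ⟪x, w⟫ = 0}

lemma hyp_smul {w : EuclideanSpace ℝ (Fin m)} {c : ℝ} (hc : c ≠ 0) : hyp (c • w) = hyp w := by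
  ext x
  simp only [hyp, Set.mem_setOf_eq, real_inner_smul_right]
  exact ⟨fun h => by rcases mul_eq_zero.1 h with h | h; exact absurd h hc; exact h,
    fun h => by rw [h, mul_zero]⟩

lemma hyp_inj {v w : EuclideanSpace ℝ (Fin m)} (hv : v ≠ 0) (hw : w ≠ 0)
    (h : hyp v = hyp w) : ∃ c : ℝ, c ≠ 0 ∧ w = c • v := by
  set c := ⟪v, w⟫ / ‖v‖ ^ 2 with hc
  have hz : w - c • v = 0 := by
    have hvv : ⟪v, v⟫ = ‖v‖ ^ 2 := real_inner_self_eq_norm_sq v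
    have hvn : ‖v‖ ≠ 0 := norm_ne_zero_iff.mpr hv
    have hvne : ‖v‖ ^ 2 ≠ 0 := pow_ne_zero 2 hvn
    have h1 : ⟪w - c • v, v⟫ = 0 := by
      rw [inner_sub_left, real_inner_smul_left, hc, real_inner_comm v w, hvv]
      field_simp
      ring
    have h2 : (w - c • v) ∈ hyp w := by
      rw [← h]; exact h1
    have h3 : ⟪w - c • v, w⟫ = 0 := h2
    have : ⟪w - c • v, w - c • v⟫ = 0 := by
      rw [inner_sub_right, h3, real_inner_smul_right, h1, mul_zero, sub_zero]
    exact inner_self_eq_zero.mp this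
  have hcw : w = c • v := by rwa [sub_eq_zero] at hz
  refine ⟨c, fun h0 => hw ?_, hcw⟩
  rw [hcw, h0, zero_smul]

-- Part A1 : on EuclideanSpace ℝ (Fin n), hausdorff measure with exponent n is
-- positive on balls, finite on bounded sets.
lemma eucl_hausdorff_fin (n : ℕ) {s : Set (EuclideanSpace ℝ (Fin n))}
    (hs : Bornology.IsBounded s) : μH[(n : ℝ)] s < ⊤ := by
  have hle := (PiLp.antilipschitzWith_ofLp 2 (fun _ : Fin n => ℝ)).le_hausdorffMeasure_image
    (n.cast_nonneg : (0:ℝ) ≤ n) s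
  have him : Bornology.IsBounded ((WithLp.equiv 2 (Fin n → ℝ)) '' s) :=
    ((PiLp.lipschitzWith_ofLp 2 (fun _ : Fin n => ℝ)).isBounded_image hs)
  have hvol : μH[(n : ℝ)] ((WithLp.equiv 2 (Fin n → ℝ)) '' s) < ⊤ := by
    have : (μH[(n : ℝ)] : Measure (Fin n → ℝ)) = volume := by
      simpa using (hausdorffMeasure_pi_real (ι := Fin n))
    rw [this]
    exact him.measure_lt_top
  calc μH[(n : ℝ)] s ≤ _ := hle
    _ < ⊤ := by
        apply ENNReal.mul_lt_top _ hvol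
        exact ENNReal.rpow_lt_top_of_nonneg n.cast_nonneg ENNReal.coe_ne_top
      
lemma eucl_hausdorff_pos (n : ℕ) {r : ℝ} (hr : 0 < r) :
    0 < μH[(n : ℝ)] (ball (0 : EuclideanSpace ℝ (Fin n)) r) := by
  set c : ℝ := (((n : ℝ≥0) ^ ((1:ℝ)/2) : ℝ≥0) : ℝ) with hcdef
  have hc : 0 ≤ c := NNReal.coe_nonneg _
  have hcl : ∀ y : Fin n → ℝ, ‖(WithLp.equiv 2 (Fin n → ℝ)).symm y‖ ≤ c * ‖y‖ := by
    intro y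
    have := (PiLp.antilipschitzWith_ofLp 2 (fun _ : Fin n => ℝ)).le_mul_dist
      ((WithLp.equiv 2 (Fin n → ℝ)).symm y) ((WithLp.equiv 2 (Fin n → ℝ)).symm 0)
    change dist ((WithLp.equiv 2 (Fin n → ℝ)).symm y) ((WithLp.equiv 2 (Fin n → ℝ)).symm 0) ≤ _ * dist y 0 at this
    simp only [dist_zero_right] at this
    have h2 : ((WithLp.equiv 2 (Fin n → ℝ)).symm (0 : Fin n → ℝ)) = 0 := rfl
    rw [h2, dist_zero_right] at this
    refine this.trans (le_of_eq ?_)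
    congr 1
    rw [hcdef]
    norm_num [Fintype.card_fin]
  have hsub : ball (0 : Fin n → ℝ) (r / (c + 1)) ⊆
      (WithLp.equiv 2 (Fin n → ℝ)) '' (ball (0 : EuclideanSpace ℝ (Fin n)) r) := by
    intro y hy
    refine ⟨(WithLp.equiv 2 (Fin n → ℝ)).symm y, ?_, rfl⟩
    rw [mem_ball_zero_iff] at hy ⊢
    calc ‖(WithLp.equiv 2 (Fin n → ℝ)).symm y‖ ≤ c * ‖y‖ := hcl y
      _ ≤ (c + 1) * ‖y‖ := by nlinarith [norm_nonneg y]
      _ < (c + 1) * (r / (c + 1)) := by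
          apply mul_lt_mul_of_pos_left hy; positivity
      _ = r := by field_simp
  have hpos : 0 < μH[(n : ℝ)] ((WithLp.equiv 2 (Fin n → ℝ)) '' (ball (0 : EuclideanSpace ℝ (Fin n)) r)) := by
    have heq : (μH[(n : ℝ)] : Measure (Fin n → ℝ)) = volume := by
      simpa using (hausdorffMeasure_pi_real (ι := Fin n))
    rw [heq]
    refine lt_of_lt_of_le ?_ (measure_mono hsub)
    exact measure_ball_pos _ _ (by positivity)
  have hle := (PiLp.lipschitzWith_ofLp 2 (fun _ : Fin n => ℝ)).hausdorffMeasure_image_le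
    (n.cast_nonneg : (0:ℝ) ≤ n) (ball (0 : EuclideanSpace ℝ (Fin n)) r)
  refine lt_of_lt_of_le hpos (hle.trans ?_)
  simp


lemma hyp_eq_orthogonal (u : EuclideanSpace ℝ (Fin m)) :
    hyp u = ((Submodule.span ℝ {u})ᗮ : Set (EuclideanSpace ℝ (Fin m))) := by
  ext x
  simp [hyp, Submodule.mem_orthogonal_singleton_iff_inner_left]

lemma finrank_orthogonal_span (hm : 1 ≤ m) {u : EuclideanSpace ℝ (Fin m)} (hu : u ≠ 0) :
    finrank ℝ ((Submodule.span ℝ {u})ᗮ) = m - 1 := by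
  have h1 := Submodule.finrank_add_finrank_orthogonal (𝕜 := ℝ) (Submodule.span ℝ {u})
  rw [finrank_span_singleton hu, finrank_euclideanSpace_fin] at h1
  omega

lemma cast_sub_one (hm : 1 ≤ m) : ((m - 1 : ℕ) : ℝ) = (m : ℝ) - 1 := by
  push_cast [Nat.cast_sub hm]
  ring

lemma hausdorff_image_subtype (hm : 1 ≤ m) {u : EuclideanSpace ℝ (Fin m)} (hu : u ≠ 0)
    (t : Set ((Submodule.span ℝ {u})ᗮ)) :
    μH[(m:ℝ)-1] ((Subtype.val : ((Submodule.span ℝ {u})ᗮ) → EuclideanSpace ℝ (Fin m)) '' t)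
      = μH[(m:ℝ)-1] ((stdOrthonormalBasis ℝ ((Submodule.span ℝ {u})ᗮ)).repr '' t) := by
  have hd : (0:ℝ) ≤ (m:ℝ) - 1 := by
    have : (1:ℝ) ≤ (m:ℝ) := by exact_mod_cast hm
    linarith
  have hval : (Subtype.val : ((Submodule.span ℝ {u})ᗮ) → EuclideanSpace ℝ (Fin m))
      = ⇑((Submodule.span ℝ {u})ᗮ).subtypeₗᵢ := rfl
  rw [hval, ((Submodule.span ℝ {u})ᗮ).subtypeₗᵢ.isometry.hausdorffMeasure_image (Or.inl hd)]
  rw [(stdOrthonormalBasis ℝ ((Submodule.span ℝ {u})ᗮ)).repr.isometry.hausdorffMeasure_image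
    (Or.inr (stdOrthonormalBasis ℝ ((Submodule.span ℝ {u})ᗮ)).repr.surjective)]

lemma hyp_hausdorff_fin (hm : 1 ≤ m) {u : EuclideanSpace ℝ (Fin m)} (hu : u ≠ 0)
    {s : Set (EuclideanSpace ℝ (Fin m))} (hbdd : Bornology.IsBounded s) (hsub : s ⊆ hyp u) :
    μH[(m:ℝ)-1] s < ⊤ := by
  set W := (Submodule.span ℝ {u})ᗮ with hW
  have hsub' : s ⊆ Set.range (Subtype.val : W → EuclideanSpace ℝ (Fin m)) := by
    rw [Subtype.range_coe_subtype]
    intro x hx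
    have := hsub hx
    rw [hyp_eq_orthogonal] at this
    exact this
  have himg : s = Subtype.val '' ((Subtype.val : W → _) ⁻¹' s) :=
    (Set.image_preimage_eq_of_subset hsub').symm
  rw [himg, hausdorff_image_subtype hm hu]
  obtain ⟨R, hR⟩ := hbdd.subset_closedBall (0 : EuclideanSpace ℝ (Fin m))
  have hbdd2 : Bornology.IsBounded ((stdOrthonormalBasis ℝ W).repr '' ((Subtype.val : W → _) ⁻¹' s)) := by
    apply Bornology.IsBounded.subset (Metric.isBounded_closedBall (x := (0 : EuclideanSpace ℝ (Fin (finrank ℝ W)))) (r := R))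
    rintro y ⟨w, hw, rfl⟩
    have h1 : ‖(w : EuclideanSpace ℝ (Fin m))‖ ≤ R := by
      have := hR hw
      simpa [Metric.mem_closedBall, dist_zero_right] using this
    simp only [Metric.mem_closedBall, dist_zero_right]
    rw [(stdOrthonormalBasis ℝ W).repr.norm_map]
    simpa using h1
  have hexp : ((finrank ℝ W : ℕ) : ℝ) = (m:ℝ) - 1 := by
    rw [hW, finrank_orthogonal_span hm hu, cast_sub_one hm]
  rw [← hexp]
  exact eucl_hausdorff_fin (finrank ℝ W) hbdd2

lemma hyp_hausdorff_pos (hm : 1 ≤ m) {u : EuclideanSpace ℝ (Fin m)} (hu : u ≠ 0)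
    {r : ℝ} (hr : 0 < r) : 0 < μH[(m:ℝ)-1] (hyp u ∩ ball 0 r) := by
  set W := (Submodule.span ℝ {u})ᗮ with hW
  have himg : hyp u ∩ ball 0 r = Subtype.val '' (ball (0 : W) r) := by
    ext x
    constructor
    · rintro ⟨hx1, hx2⟩
      rw [hyp_eq_orthogonal] at hx1
      refine ⟨⟨x, hx1⟩, ?_, rfl⟩
      simpa [Metric.mem_ball, dist_zero_right] using (mem_ball_zero_iff.mp hx2)
    · rintro ⟨w, hw, rfl⟩
      constructor
      · rw [hyp_eq_orthogonal]; exact w.2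
      · rw [mem_ball_zero_iff]
        have : ‖w‖ < r := by simpa [Metric.mem_ball, dist_zero_right] using hw
        simpa using this
  rw [himg, hausdorff_image_subtype hm hu]
  have hball : (stdOrthonormalBasis ℝ W).repr '' (ball (0 : W) r)
      = ball (0 : EuclideanSpace ℝ (Fin (finrank ℝ W))) r := by
    have := (stdOrthonormalBasis ℝ W).repr.toIsometryEquiv.image_ball (0 : W) r
    simpa using this
  rw [hball]
  have hexp : ((finrank ℝ W : ℕ) : ℝ) = (m:ℝ) - 1 := by
    rw [hW, finrank_orthogonal_span hm hu, cast_sub_one hm]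
  rw [← hexp]
  exact eucl_hausdorff_pos (finrank ℝ W) hr


lemma reflection_singleton_apply' (v x : EuclideanSpace ℝ (Fin m)) :
    Submodule.reflection (Submodule.span ℝ {v}) x = (2*(⟪v,x⟫/‖v‖^2)) • v - x := by
  rw [Submodule.reflection_apply, Submodule.starProjection_singleton, two_smul]
  simp only [RCLike.ofReal_real_eq_id, id]
  module

/-- The rotation taking `u₀` to `u`: reflect through the line spanned by `u₀`,
then through the line spanned by `u₀ + u`. -/
noncomputable def rot (u₀ u : EuclideanSpace ℝ (Fin m)) :
    EuclideanSpace ℝ (Fin m) ≃ₗᵢ[ℝ] EuclideanSpace ℝ (Fin m) :=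
  (Submodule.reflection (Submodule.span ℝ {u₀})).trans (Submodule.reflection (Submodule.span ℝ {u₀ + u}))

lemma rot_apply (u₀ u x : EuclideanSpace ℝ (Fin m)) :
    rot u₀ u x = Submodule.reflection (Submodule.span ℝ {u₀ + u}) (Submodule.reflection (Submodule.span ℝ {u₀}) x) :=
  rfl

/-- Key quantitative estimate: the two reflections are close when `u` is close to `u₀`. -/
lemma refl_diff_bound {u₀ u : EuclideanSpace ℝ (Fin m)} (h0 : ‖u₀‖ = 1) (h1 : ‖u‖ = 1)
    (he : ‖u - u₀‖ ≤ 1/2) (x : EuclideanSpace ℝ (Fin m)) :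
    ‖Submodule.reflection (Submodule.span ℝ {u₀ + u}) x - Submodule.reflection (Submodule.span ℝ {u₀}) x‖
      ≤ 16 * ‖u - u₀‖ * ‖x‖ := by
  have hkey : Submodule.reflection (Submodule.span ℝ {u₀ + u}) x - Submodule.reflection (Submodule.span ℝ {u₀}) x
      = (2*(⟪u₀ + u,x⟫/‖u₀ + u‖^2) - (⟪u₀ + u,x⟫ - ⟪u - u₀,x⟫)/2) • (u₀ + u)
        + ((⟪u₀ + u,x⟫ - ⟪u - u₀,x⟫)/2) • (u - u₀) := by
    have e1 : Submodule.reflection (Submodule.span ℝ {u₀ + u}) x = (2*(⟪u₀+u,x⟫/‖u₀+u‖^2)) • (u₀+u) - x :=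
      reflection_singleton_apply' _ _
    have e2 : Submodule.reflection (Submodule.span ℝ {u₀}) x = (2*(⟪u₀,x⟫/‖u₀‖^2)) • u₀ - x :=
      reflection_singleton_apply' _ _
    rw [e1, e2, h0]
    have h3 : ⟪u₀,x⟫ = (⟪u₀ + u,x⟫ - ⟪u - u₀,x⟫)/2 := by
      rw [inner_add_left, inner_sub_left]; ring
    rw [h3]
    match_scalars <;> ring
  have habs : |⟪u₀ + u, x⟫| ≤ ‖u₀ + u‖ * ‖x‖ := abs_real_inner_le_norm _ _
  have hbbs : |⟪u - u₀, x⟫| ≤ ‖u - u₀‖ * ‖x‖ := abs_real_inner_le_norm _ _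
  have hns_close : |‖u₀ + u‖ - 2| ≤ ‖u - u₀‖ := by
    have h2 : ‖(2:ℝ) • u₀‖ = 2 := by rw [norm_smul, h0]; norm_num
    have h3 := abs_norm_sub_norm_le (u₀ + u) ((2:ℝ) • u₀)
    have h4 : u₀ + u - (2:ℝ) • u₀ = u - u₀ := by module
    rw [h4, h2] at h3
    exact h3
  rw [hkey]
  set a := ⟪u₀ + u, x⟫ with ha
  set b := ⟪u - u₀, x⟫ with hb
  set ns := ‖u₀ + u‖ with hns
  set ne' := ‖u - u₀‖ with hne
  have hxnn : (0:ℝ) ≤ ‖x‖ := norm_nonneg x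
  have henn : (0:ℝ) ≤ ne' := norm_nonneg _
  have hns_l : (3:ℝ)/2 ≤ ns := by have := abs_le.1 hns_close; linarith [this.1]
  have hns_u : ns ≤ (5:ℝ)/2 := by have := abs_le.1 hns_close; linarith [this.2]
  have hns_pos : (0:ℝ) < ns := by linarith
  set c₁ : ℝ := 2*(a/ns^2) - (a-b)/2 with hc₁
  have hc₁eq : c₁ * (2 * ns^2) = a * (4 - ns^2) + b * ns^2 := by
    rw [hc₁]; field_simp; ring
  have h4ns : |4 - ns^2| ≤ 5 * ne' := by
    have hfact : 4 - ns^2 = (2 - ns) * (2 + ns) := by ring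
    rw [hfact, abs_mul]
    have h5 : |2 + ns| ≤ 5 := by rw [abs_le]; constructor <;> linarith
    have h6 : |2 - ns| ≤ ne' := by rw [abs_sub_comm] at hns_close; exact hns_close
    calc |2 - ns| * |2 + ns| ≤ ne' * 5 := mul_le_mul h6 h5 (abs_nonneg _) henn
      _ = 5 * ne' := by ring
  have hc₁ns : |c₁| * ns ≤ 4 * ne' * ‖x‖ := by
    have h7 : |c₁| * (2 * ns^2) ≤ (ns * ‖x‖) * (5 * ne') + (ne' * ‖x‖) * ns^2 := by
      calc |c₁| * (2 * ns^2) = |c₁ * (2 * ns^2)| := by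
            rw [abs_mul, abs_of_pos (show (0:ℝ) < 2*ns^2 by positivity)]
        _ = |a * (4 - ns^2) + b * ns^2| := by rw [hc₁eq]
        _ ≤ |a| * |4 - ns^2| + |b| * ns^2 := by
            refine (abs_add_le _ _).trans ?_
            rw [abs_mul, abs_mul, abs_of_pos (show (0:ℝ) < ns^2 by positivity)]
        _ ≤ (ns * ‖x‖) * (5 * ne') + (ne' * ‖x‖) * ns^2 := by
            have h8 : |a| * |4 - ns^2| ≤ (ns * ‖x‖) * (5 * ne') :=
              mul_le_mul habs h4ns (abs_nonneg _) (by positivity)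
            have h9 : |b| * ns^2 ≤ (ne' * ‖x‖) * ns^2 :=
              mul_le_mul_of_nonneg_right hbbs (by positivity)
            linarith
    have h10 : |c₁| * ns * (2 * ns) ≤ (4 * ne' * ‖x‖) * (2 * ns) := by
      calc |c₁| * ns * (2 * ns) = |c₁| * (2 * ns^2) := by ring
        _ ≤ (ns * ‖x‖) * (5 * ne') + (ne' * ‖x‖) * ns^2 := h7
        _ = ns * ne' * ‖x‖ * (5 + ns) := by ring
        _ ≤ ns * ne' * ‖x‖ * 8 := by
            apply mul_le_mul_of_nonneg_left (by linarith) (by positivity)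
        _ = (4 * ne' * ‖x‖) * (2 * ns) := by ring
    exact le_of_mul_le_mul_right h10 (by positivity)
  calc ‖c₁ • (u₀ + u) + ((a-b)/2) • (u - u₀)‖
      ≤ ‖c₁ • (u₀ + u)‖ + ‖((a-b)/2) • (u - u₀)‖ := norm_add_le _ _
    _ = |c₁| * ns + |(a-b)/2| * ne' := by rw [norm_smul, norm_smul]; rfl
    _ ≤ 4 * ne' * ‖x‖ + ((ns * ‖x‖ + ne' * ‖x‖)/2) * ne' := by
        have habd : |a - b| ≤ ns * ‖x‖ + ne' * ‖x‖ := by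
          calc |a - b| ≤ |a| + |b| := abs_sub _ _
            _ ≤ ns * ‖x‖ + ne' * ‖x‖ := by linarith
        have h11 : |(a-b)/2| ≤ (ns * ‖x‖ + ne' * ‖x‖)/2 := by
          rw [abs_div, abs_two]; linarith
        have := mul_le_mul_of_nonneg_right h11 henn
        linarith [hc₁ns]
    _ ≤ 16 * ne' * ‖x‖ := by
        have t1 : (ns * ‖x‖ + ne' * ‖x‖)/2 ≤ (3/2) * ‖x‖ := by
          have := mul_le_mul_of_nonneg_right hns_u hxnn
          have := mul_le_mul_of_nonneg_right he hxnn
          linarith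
        have t3 : ((ns * ‖x‖ + ne' * ‖x‖)/2) * ne' ≤ ((3/2) * ‖x‖) * ne' :=
          mul_le_mul_of_nonneg_right t1 henn
        nlinarith [mul_nonneg henn hxnn]

lemma ns_lower {u₀ u : EuclideanSpace ℝ (Fin m)} (h0 : ‖u₀‖ = 1)
    (he : ‖u - u₀‖ ≤ 1/2) : (3:ℝ)/2 ≤ ‖u₀ + u‖ := by
  have h2 : ‖(2:ℝ) • u₀‖ = 2 := by rw [norm_smul, h0]; norm_num
  have h3 := abs_norm_sub_norm_le (u₀ + u) ((2:ℝ) • u₀)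
  have h4 : u₀ + u - (2:ℝ) • u₀ = u - u₀ := by module
  rw [h4, h2] at h3
  have := (abs_le.1 h3).1
  linarith

lemma rot_fixed {u₀ u : EuclideanSpace ℝ (Fin m)} (h0 : ‖u₀‖ = 1) (h1 : ‖u‖ = 1)
    (he : ‖u - u₀‖ ≤ 1/2) : rot u₀ u u₀ = u := by
  have hns := ns_lower h0 he
  have hns0 : ‖u₀ + u‖ ≠ 0 := by intro h; rw [h] at hns; linarith
  rw [rot_apply, Submodule.reflection_mem_subspace_eq_self (Submodule.mem_span_singleton_self u₀),
    reflection_singleton_apply']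
  have hsu : ⟪u₀ + u, u₀⟫ = ‖u₀ + u‖^2/2 := by
    rw [← real_inner_self_eq_norm_sq, real_inner_add_add_self]
    rw [inner_add_left]
    rw [real_inner_self_eq_norm_sq, real_inner_self_eq_norm_sq, h0, h1, real_inner_comm u u₀]
    ring
  rw [hsu]
  have hcoef : 2 * (‖u₀ + u‖^2/2/‖u₀ + u‖^2) = 1 := by field_simp
  rw [hcoef, one_smul]
  abel

lemma rot_image_hyp {u₀ u : EuclideanSpace ℝ (Fin m)} (h0 : ‖u₀‖ = 1) (h1 : ‖u‖ = 1)
    (he : ‖u - u₀‖ ≤ 1/2) : (rot u₀ u) '' (hyp u₀) = hyp u := by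
  ext x
  constructor
  · rintro ⟨y, hy, rfl⟩
    have h5 : ⟪rot u₀ u y, u⟫ = ⟪rot u₀ u y, rot u₀ u u₀⟫ := by
      rw [rot_fixed h0 h1 he]
    have h6 : ⟪rot u₀ u y, u⟫ = ⟪y, u₀⟫ := by
      rw [h5]; exact (rot u₀ u).inner_map_map y u₀
    show ⟪rot u₀ u y, u⟫ = 0
    rw [h6]; exact hy
  · intro hx
    refine ⟨(rot u₀ u).symm x, ?_, by simp⟩
    have h5 : ⟪(rot u₀ u).symm x, u₀⟫ = ⟪rot u₀ u ((rot u₀ u).symm x), rot u₀ u u₀⟫ :=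
      ((rot u₀ u).inner_map_map _ _).symm
    have h6 : ⟪(rot u₀ u).symm x, u₀⟫ = ⟪x, u⟫ := by
      rw [h5, rot_fixed h0 h1 he, (rot u₀ u).apply_symm_apply]
    show ⟪(rot u₀ u).symm x, u₀⟫ = 0
    rw [h6]; exact hx

lemma rot_dist {u₀ u : EuclideanSpace ℝ (Fin m)} (h0 : ‖u₀‖ = 1) (h1 : ‖u‖ = 1)
    (he : ‖u - u₀‖ ≤ 1/2) (x : EuclideanSpace ℝ (Fin m)) :
    ‖rot u₀ u x - x‖ ≤ 16 * ‖u - u₀‖ * ‖x‖ := by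
  have hd : rot u₀ u x - x = Submodule.reflection (Submodule.span ℝ {u₀ + u}) (Submodule.reflection (Submodule.span ℝ {u₀}) x)
      - Submodule.reflection (Submodule.span ℝ {u₀}) (Submodule.reflection (Submodule.span ℝ {u₀}) x) := by
    rw [Submodule.reflection_reflection, rot_apply]
  rw [hd]
  have hny : ‖Submodule.reflection (Submodule.span ℝ {u₀}) x‖ = ‖x‖ :=
    (Submodule.reflection (Submodule.span ℝ {u₀})).norm_map x
  calc _ ≤ 16 * ‖u - u₀‖ * ‖Submodule.reflection (Submodule.span ℝ {u₀}) x‖ := refl_diff_bound h0 h1 he _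
    _ = 16 * ‖u - u₀‖ * ‖x‖ := by rw [hny]

lemma rot_symm_dist {u₀ u : EuclideanSpace ℝ (Fin m)} (h0 : ‖u₀‖ = 1) (h1 : ‖u‖ = 1)
    (he : ‖u - u₀‖ ≤ 1/2) (x : EuclideanSpace ℝ (Fin m)) :
    ‖(rot u₀ u).symm x - x‖ ≤ 16 * ‖u - u₀‖ * ‖x‖ := by
  have hsymm : (rot u₀ u).symm x
      = Submodule.reflection (Submodule.span ℝ {u₀}) (Submodule.reflection (Submodule.span ℝ {u₀ + u}) x) := by
    rw [rot]
    simp [Submodule.reflection_symm]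
  rw [hsymm]
  calc ‖Submodule.reflection (Submodule.span ℝ {u₀}) (Submodule.reflection (Submodule.span ℝ {u₀ + u}) x) - x‖
      = ‖Submodule.reflection (Submodule.span ℝ {u₀}) (Submodule.reflection (Submodule.span ℝ {u₀ + u}) x)
          - Submodule.reflection (Submodule.span ℝ {u₀}) (Submodule.reflection (Submodule.span ℝ {u₀}) x)‖ := by
        rw [Submodule.reflection_reflection]
    _ = ‖Submodule.reflection (Submodule.span ℝ {u₀ + u}) x - Submodule.reflection (Submodule.span ℝ {u₀}) x‖ := by
        rw [← (Submodule.reflection (Submodule.span ℝ {u₀})).map_sub]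
        exact (Submodule.reflection (Submodule.span ℝ {u₀})).norm_map _
    _ ≤ 16 * ‖u - u₀‖ * ‖x‖ := refl_diff_bound h0 h1 he x


lemma hyp_smul_set {u : EuclideanSpace ℝ (Fin m)} {c : ℝ} (hc : c ≠ 0) :
    c • hyp u = hyp u := by
  ext x
  constructor
  · rintro ⟨y, hy, rfl⟩
    show ⟪c • y, u⟫ = 0
    rw [real_inner_smul_left, hy, mul_zero]
  · intro hx
    refine ⟨c⁻¹ • x, ?_, by show c • (c⁻¹ • x) = x; rw [smul_smul, mul_inv_cancel₀ hc, one_smul]⟩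
    show ⟪c⁻¹ • x, u⟫ = 0
    rw [real_inner_smul_left, hx, mul_zero]

lemma smul_set_inter' {c : ℝ} (hc : c ≠ 0) (X Y : Set (EuclideanSpace ℝ (Fin m))) :
    c • (X ∩ Y) = c • X ∩ c • Y :=
  Set.smul_set_inter₀ hc

lemma smul_mem_convex {K : Set (EuclideanSpace ℝ (Fin m))} (hK : Convex ℝ K)
    (h0 : (0:EuclideanSpace ℝ (Fin m)) ∈ K) {t : ℝ} (ht0 : 0 ≤ t) (ht1 : t ≤ 1)
    {x : EuclideanSpace ℝ (Fin m)} (hx : x ∈ K) : t • x ∈ K := by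
  have := hK h0 hx (by linarith : (0:ℝ) ≤ 1 - t) ht0 (by ring)
  simpa using this

lemma mem_one_add_smul {K : Set (EuclideanSpace ℝ (Fin m))} (hK : Convex ℝ K)
    {ρ : ℝ} (hρ : 0 < ρ) (hball : ball 0 ρ ⊆ K) {δ : ℝ} (hδ : 0 < δ)
    {x y : EuclideanSpace ℝ (Fin m)} (hx : x ∈ K) (hy : ‖y - x‖ < δ * ρ) :
    y ∈ (1+δ) • K := by
  have h1 : y - x ∈ ball (0:EuclideanSpace ℝ (Fin m)) (δ*ρ) := by
    rw [mem_ball_zero_iff]; exact hy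
  have hb : ball (0:EuclideanSpace ℝ (Fin m)) (δ*ρ) = δ • ball 0 ρ := by
    rw [_root_.smul_ball (ne_of_gt hδ), smul_zero, Real.norm_eq_abs, abs_of_pos hδ]
  have h2 : y - x ∈ δ • K := by
    rw [hb] at h1; exact Set.smul_set_mono hball h1
  have h3 : y ∈ K + δ • K := by
    rw [Set.mem_add]
    exact ⟨x, hx, y - x, h2, by abel⟩
  have h4 : (1+δ) • K = K + δ • K := by
    rw [Convex.add_smul hK zero_le_one (le_of_lt hδ), one_smul]
  rwa [h4]

lemma mem_of_close_shrink {K : Set (EuclideanSpace ℝ (Fin m))} (hK : Convex ℝ K)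
    {ρ : ℝ} (hρ : 0 < ρ) (hball : ball 0 ρ ⊆ K) {δ : ℝ} (hδ0 : 0 < δ) (hδ1 : δ ≤ 1)
    {x y : EuclideanSpace ℝ (Fin m)} (hx : x ∈ K) (hy : ‖y - (1-δ) • x‖ < δ * ρ) :
    y ∈ K := by
  have h1 : y - (1-δ) • x ∈ δ • K := by
    have h2 : y - (1-δ) • x ∈ ball (0:EuclideanSpace ℝ (Fin m)) (δ*ρ) := by
      rw [mem_ball_zero_iff]; exact hy
    have hb : ball (0:EuclideanSpace ℝ (Fin m)) (δ*ρ) = δ • ball 0 ρ := by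
      rw [_root_.smul_ball (ne_of_gt hδ0), smul_zero, Real.norm_eq_abs, abs_of_pos hδ0]
    rw [hb] at h2; exact Set.smul_set_mono hball h2
  have h3 : y ∈ (1-δ) • K + δ • K := by
    rw [Set.mem_add]
    exact ⟨(1-δ) • x, Set.smul_mem_smul_set hx, y - (1-δ) • x, h1, by abel⟩
  have h4 : (1:ℝ) • K = (1-δ) • K + δ • K := by
    rw [← Convex.add_smul hK (by linarith) (le_of_lt hδ0)]
    norm_num
  rw [← one_smul ℝ K, h4]
  exact h3

-- Bernoulli-type bounds
lemma pow_one_add_le {δ : ℝ} (hδ0 : 0 ≤ δ) (hδ1 : δ ≤ 1) (n : ℕ) :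
    (1+δ)^n ≤ 1 + (2^n - 1) * δ := by
  induction n with
  | zero => simp
  | succ n ih =>
    have h2 : (0:ℝ) ≤ 2^n - 1 := by
      have : (1:ℝ) ≤ 2^n := one_le_pow₀ (by norm_num)
      linarith
    calc (1+δ)^(n+1) = (1+δ)^n * (1+δ) := by ring
      _ ≤ (1 + (2^n - 1) * δ) * (1+δ) := by
          apply mul_le_mul_of_nonneg_right ih (by linarith)
      _ = 1 + (2^(n+1) - 1) * δ + ((2^n - 1) * δ) * (δ - 1) := by ring
      _ ≤ 1 + (2^(n+1) - 1) * δ := by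
          have hneg : (2^n - 1) * δ * (δ - 1) ≤ 0 :=
            mul_nonpos_of_nonneg_of_nonpos (mul_nonneg h2 hδ0) (by linarith)
          linarith
  
lemma one_sub_pow_ge {δ : ℝ} (hδ0 : 0 ≤ δ) (hδ1 : δ ≤ 1) (n : ℕ) :
    1 - (n:ℝ) * δ ≤ (1-δ)^n := by
  have := one_add_mul_le_pow (a := -δ) (by linarith) n
  simpa [← sub_eq_add_neg] using this



section PartD

variable {m : ℕ}

lemma hyp_closed (u : EuclideanSpace ℝ (Fin m)) : IsClosed (hyp u) :=
  isClosed_eq (continuous_id.inner continuous_const) continuous_const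

lemma hyp_ne (u : EuclideanSpace ℝ (Fin m)) : u ≠ 0 → u ∉ hyp u := by
  intro hu h
  have : ⟪u, u⟫ = 0 := h
  exact hu (inner_self_eq_zero.mp this)

lemma V_smul (hm : 1 ≤ m) {c : ℝ} (hc : 0 < c) (S : Set (EuclideanSpace ℝ (Fin m))) :
    (μH[(m:ℝ)-1] (c • S)).toReal = c^(m-1) * (μH[(m:ℝ)-1] S).toReal := by
  have hd : (0:ℝ) ≤ (m:ℝ)-1 := by
    have : (1:ℝ) ≤ (m:ℝ) := by exact_mod_cast hm
    linarith
  rw [Measure.hausdorffMeasure_smul₀ hd (ne_of_gt hc)]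
  rw [← cast_sub_one hm, NNReal.rpow_natCast]
  rw [ENNReal.smul_def, smul_eq_mul, ENNReal.toReal_mul]
  congr 1
  rw [ENNReal.coe_toReal, NNReal.coe_pow, coe_nnnorm, Real.norm_eq_abs, abs_of_pos hc]

lemma integrableOn_id (hm : 1 ≤ m) {u : EuclideanSpace ℝ (Fin m)} (hu : u ≠ 0)
    {R : ℝ} {B : Set (EuclideanSpace ℝ (Fin m))}
    (hB : MeasurableSet B) (hBsub : B ⊆ hyp u) (hbd : B ⊆ closedBall 0 R) :
    IntegrableOn (fun x => x) B (μH[(m:ℝ)-1]) := by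
  apply Measure.integrableOn_of_bounded (M := R)
  · exact ne_of_lt (hyp_hausdorff_fin hm hu (Metric.isBounded_closedBall.subset hbd) hBsub)
  · exact continuous_id.aestronglyMeasurable
  · refine (ae_restrict_iff' hB).mpr (Filter.Eventually.of_forall (fun x hx => ?_))
    simpa [Metric.mem_closedBall, dist_zero_right] using hbd hx

lemma sandwich_est (hm : 2 ≤ m) {K : Set (EuclideanSpace ℝ (Fin m))}
    (hKconv : Convex ℝ K) (hKcomp : IsCompact K)
    {u₀ : EuclideanSpace ℝ (Fin m)} (hu₀ : ‖u₀‖ = 1)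
    {ρ r : ℝ} (hρ : 0 < ρ) (hρr : ρ ≤ r)
    (hball : ball 0 ρ ⊆ K) (hKr : K ⊆ closedBall 0 r)
    {δ : ℝ} (hδ0 : 0 < δ) (hδ1 : δ ≤ 1/2)
    {A : Set (EuclideanSpace ℝ (Fin m))} (hAcomp : IsCompact A)
    (hA1 : (1-δ) • K ⊆ A) (hA2 : A ⊆ (1+δ) • K) :
    |(μH[(m:ℝ)-1] (A ∩ hyp u₀)).toReal - (μH[(m:ℝ)-1] (K ∩ hyp u₀)).toReal|
        ≤ (2^m + m) * δ * (μH[(m:ℝ)-1] (K ∩ hyp u₀)).toReal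
    ∧ ‖(∫ x in A ∩ hyp u₀, x ∂(μH[(m:ℝ)-1])) - (∫ x in K ∩ hyp u₀, x ∂(μH[(m:ℝ)-1]))‖
        ≤ 4*r*((2^m + m) * δ * (μH[(m:ℝ)-1] (K ∩ hyp u₀)).toReal) := by
  have hm1 : 1 ≤ m := le_trans (by norm_num) hm
  have hu₀ne : u₀ ≠ 0 := by intro h; rw [h, norm_zero] at hu₀; norm_num at hu₀
  have h1δ : (0:ℝ) < 1-δ := by linarith
  have h2δ : (0:ℝ) < 1+δ := by linarith
  have h0K : (0 : EuclideanSpace ℝ (Fin m)) ∈ K := hball (mem_ball_self hρ)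
  have hr0 : (0:ℝ) < r := lt_of_lt_of_le hρ hρr
  set μ := (μH[(m:ℝ)-1] : Measure (EuclideanSpace ℝ (Fin m))) with hμ
  set S := K ∩ hyp u₀ with hS
  set B := A ∩ hyp u₀ with hB
  set L := (1-δ) • S with hL
  set U := (1+δ) • S with hU
  -- inclusions
  have hLB : L ⊆ B := by
    rw [hL, hS, smul_set_inter' (ne_of_gt h1δ), hyp_smul_set (ne_of_gt h1δ)]
    exact Set.inter_subset_inter hA1 subset_rfl
  have hBU : B ⊆ U := by
    rw [hU, hS, smul_set_inter' (ne_of_gt h2δ), hyp_smul_set (ne_of_gt h2δ)]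
    exact Set.inter_subset_inter hA2 subset_rfl
  have hLS : L ⊆ S := by
    rintro x ⟨s, ⟨hsK, hsh⟩, rfl⟩
    exact ⟨smul_mem_convex hKconv h0K (by linarith) (by linarith) hsK,
      by show ⟪(1-δ) • s, u₀⟫ = 0; rw [real_inner_smul_left, hsh, mul_zero]⟩
  have hSU : S ⊆ U := by
    intro s hs
    refine ⟨(1+δ)⁻¹ • s, ⟨?_, ?_⟩, by
      show (1+δ) • ((1+δ)⁻¹ • s) = s
      rw [smul_smul, mul_inv_cancel₀ (ne_of_gt h2δ), one_smul]⟩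
    · exact smul_mem_convex hKconv h0K (by positivity)
        (by rw [inv_le_one_iff₀]; right; linarith) hs.1
    · show ⟪(1+δ)⁻¹ • s, u₀⟫ = 0
      rw [real_inner_smul_left, hs.2, mul_zero]
  have hLU : L ⊆ U := hLS.trans hSU
  -- compactness and measurability
  have hScomp : IsCompact S := hKcomp.inter_right (hyp_closed u₀)
  have hBcomp : IsCompact B := hAcomp.inter_right (hyp_closed u₀)
  have hLcomp : IsCompact L := by
    have := hScomp.image (continuous_const_smul ((1-δ):ℝ))
    rwa [Set.image_smul] at this
  have hUcomp : IsCompact U := by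
    have := hScomp.image (continuous_const_smul ((1+δ):ℝ))
    rwa [Set.image_smul] at this
  -- boundedness and hyperplane containment
  have hShyp : S ⊆ hyp u₀ := Set.inter_subset_right
  have hUhyp : U ⊆ hyp u₀ := by
    rw [hU]
    rintro x ⟨s, hs, rfl⟩
    show ⟪(1+δ) • s, u₀⟫ = 0
    rw [real_inner_smul_left, hs.2, mul_zero]
  have hSbd : S ⊆ closedBall 0 r := fun x hx => hKr hx.1
  have hUbd : U ⊆ closedBall 0 (2*r) := by
    rintro x ⟨s, hs, rfl⟩
    have h1 : ‖s‖ ≤ r := by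
      simpa [Metric.mem_closedBall, dist_zero_right] using hSbd hs
    simp only [Metric.mem_closedBall, dist_zero_right]
    rw [norm_smul, Real.norm_eq_abs, abs_of_pos h2δ]
    nlinarith
  -- finiteness
  have hfinU : μ U < ⊤ := hyp_hausdorff_fin hm1 hu₀ne (Metric.isBounded_closedBall.subset hUbd) hUhyp
  have hfinS : μ S < ⊤ := lt_of_le_of_lt (measure_mono hSU) hfinU
  have hfinB : μ B < ⊤ := lt_of_le_of_lt (measure_mono hBU) hfinU
  have hfinL : μ L < ⊤ := lt_of_le_of_lt (measure_mono hLU) hfinU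
  -- scaling values
  have hVU : (μ U).toReal = (1+δ)^(m-1) * (μ S).toReal := V_smul hm1 h2δ S
  have hVL : (μ L).toReal = (1-δ)^(m-1) * (μ S).toReal := V_smul hm1 h1δ S
  have hVSnn : (0:ℝ) ≤ (μ S).toReal := ENNReal.toReal_nonneg
  -- annulus bound
  have hCdelta : (1+δ)^(m-1) - (1-δ)^(m-1) ≤ (2^m + m) * δ := by
    have hb1 := pow_one_add_le (le_of_lt hδ0) (by linarith) (m-1)
    have hb2 := one_sub_pow_ge (le_of_lt hδ0) (by linarith) (m-1)
    have h2pow : (2:ℝ)^(m-1) ≤ 2^m := pow_le_pow_right₀ one_le_two (Nat.sub_le m 1)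
    have hcm : ((m-1:ℕ):ℝ) ≤ (m:ℝ) := by exact_mod_cast Nat.sub_le m 1
    nlinarith [mul_le_mul_of_nonneg_right h2pow (le_of_lt hδ0),
      mul_le_mul_of_nonneg_right hcm (le_of_lt hδ0)]
  have hannulus : (μ U).toReal - (μ L).toReal ≤ (2^m + m) * δ * (μ S).toReal := by
    rw [hVU, hVL]
    have := mul_le_mul_of_nonneg_right hCdelta hVSnn
    linarith
  -- V B bounds
  have hVLB : (μ L).toReal ≤ (μ B).toReal :=
    (ENNReal.toReal_le_toReal (ne_of_lt hfinL) (ne_of_lt hfinB)).mpr (measure_mono hLB)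
  have hVBU : (μ B).toReal ≤ (μ U).toReal :=
    (ENNReal.toReal_le_toReal (ne_of_lt hfinB) (ne_of_lt hfinU)).mpr (measure_mono hBU)
  have hVLS : (μ L).toReal ≤ (μ S).toReal :=
    (ENNReal.toReal_le_toReal (ne_of_lt hfinL) (ne_of_lt hfinS)).mpr (measure_mono hLS)
  have hVSU : (μ S).toReal ≤ (μ U).toReal :=
    (ENNReal.toReal_le_toReal (ne_of_lt hfinS) (ne_of_lt hfinU)).mpr (measure_mono hSU)
  constructor
  · rw [abs_le]
    constructor <;> linarith
  -- integral estimate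
  · have hIntB : IntegrableOn (fun x => x) B μ :=
      integrableOn_id hm1 hu₀ne hBcomp.measurableSet (hBU.trans hUhyp) (hBU.trans hUbd)
    have hIntS : IntegrableOn (fun x => x) S μ :=
      integrableOn_id hm1 hu₀ne hScomp.measurableSet hShyp hSbd
    have hIntL : IntegrableOn (fun x => x) L μ := hIntS.mono_set hLS
    have hIntBL : IntegrableOn (fun x => x) (B \ L) μ := hIntB.mono_set Set.diff_subset
    have hIntSL : IntegrableOn (fun x => x) (S \ L) μ := hIntS.mono_set Set.diff_subset
    have hmBL : MeasurableSet (B \ L) := hBcomp.measurableSet.diff hLcomp.measurableSet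
    have hmSL : MeasurableSet (S \ L) := hScomp.measurableSet.diff hLcomp.measurableSet
    have hIB : (∫ x in B, x ∂μ) = (∫ x in L, x ∂μ) + (∫ x in B \ L, x ∂μ) := by
      conv_lhs => rw [← Set.union_diff_cancel hLB]
      exact setIntegral_union disjoint_sdiff_self_right hmBL hIntL hIntBL
    have hIS : (∫ x in S, x ∂μ) = (∫ x in L, x ∂μ) + (∫ x in S \ L, x ∂μ) := by
      conv_lhs => rw [← Set.union_diff_cancel hLS]
      exact setIntegral_union disjoint_sdiff_self_right hmSL hIntL hIntSL
    -- measures of the difference sets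
    have hdiffbound : ∀ {T : Set (EuclideanSpace ℝ (Fin m))}, T ⊆ U → MeasurableSet T →
        (μ (T \ L)).toReal ≤ (μ U).toReal - (μ L).toReal := by
      intro T hTU hTm
      have h1 : μ (T \ L) ≤ μ (U \ L) := measure_mono (Set.diff_subset_diff_left hTU)
      have h2 : μ (U \ L) = μ U - μ L :=
        measure_diff hLU hLcomp.measurableSet.nullMeasurableSet (ne_of_lt hfinL)
      have h3 : (μ (U \ L)).toReal = (μ U).toReal - (μ L).toReal := by
        rw [h2, ENNReal.toReal_sub_of_le (measure_mono hLU) (ne_of_lt hfinU)]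
      rw [← h3]
      exact (ENNReal.toReal_le_toReal (ne_of_lt (lt_of_le_of_lt h1 (lt_of_le_of_lt (measure_mono Set.diff_subset) hfinU))) (ne_of_lt (lt_of_le_of_lt (measure_mono Set.diff_subset) hfinU))).mpr h1
    have hnormBL : ‖∫ x in B \ L, x ∂μ‖ ≤ (2*r) * (μ (B \ L)).toReal := by
      apply norm_setIntegral_le_of_norm_le_const (lt_of_le_of_lt (measure_mono ((Set.diff_subset).trans hBU)) hfinU)
      · intro x hx
        have := hUbd (hBU (Set.diff_subset hx))
        simpa [Metric.mem_closedBall, dist_zero_right] using this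
    have hnormSL : ‖∫ x in S \ L, x ∂μ‖ ≤ (2*r) * (μ (S \ L)).toReal := by
      apply norm_setIntegral_le_of_norm_le_const (lt_of_le_of_lt (measure_mono ((Set.diff_subset).trans hSU)) hfinU)
      · intro x hx
        have := hUbd (hSU (Set.diff_subset hx))
        simpa [Metric.mem_closedBall, dist_zero_right] using this
    have hBLm : (μ (B \ L)).toReal ≤ (μ U).toReal - (μ L).toReal := hdiffbound hBU hBcomp.measurableSet
    have hSLm : (μ (S \ L)).toReal ≤ (μ U).toReal - (μ L).toReal := hdiffbound hSU hScomp.measurableSet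
    calc ‖(∫ x in B, x ∂μ) - (∫ x in S, x ∂μ)‖
        = ‖(∫ x in B \ L, x ∂μ) - (∫ x in S \ L, x ∂μ)‖ := by rw [hIB, hIS]; congr 1; abel
      _ ≤ ‖∫ x in B \ L, x ∂μ‖ + ‖∫ x in S \ L, x ∂μ‖ := norm_sub_le _ _
      _ ≤ (2*r) * ((μ U).toReal - (μ L).toReal) + (2*r) * ((μ U).toReal - (μ L).toReal) := by
          have e1 := hnormBL.trans (mul_le_mul_of_nonneg_left hBLm (by linarith))
          have e2 := hnormSL.trans (mul_le_mul_of_nonneg_left hSLm (by linarith))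
          linarith
      _ ≤ 4*r*((2^m + m) * δ * (μ S).toReal) := by nlinarith [hannulus, hr0]

end PartD


section PartE

variable {m : ℕ}

lemma measure_image_isometry (R : EuclideanSpace ℝ (Fin m) ≃ₗᵢ[ℝ] EuclideanSpace ℝ (Fin m))
    (B : Set (EuclideanSpace ℝ (Fin m))) :
    μH[(m:ℝ)-1] (⇑R '' B) = μH[(m:ℝ)-1] B :=
  R.isometry.hausdorffMeasure_image (Or.inr R.surjective) B

lemma integral_image_isometry (R : EuclideanSpace ℝ (Fin m) ≃ₗᵢ[ℝ] EuclideanSpace ℝ (Fin m))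
    {B : Set (EuclideanSpace ℝ (Fin m))}
    (hIB : IntegrableOn (fun x => x) B (μH[(m:ℝ)-1])) :
    (∫ x in ⇑R '' B, x ∂(μH[(m:ℝ)-1])) = R (∫ x in B, x ∂(μH[(m:ℝ)-1])) := by
  have h1 : MeasurePreserving (⇑R) (μH[(m:ℝ)-1]) (μH[(m:ℝ)-1]) :=
    R.toIsometryEquiv.measurePreserving_hausdorffMeasure ((m:ℝ)-1)
  have h2 : MeasurableEmbedding (⇑R) := R.toHomeomorph.measurableEmbedding
  rw [h1.setIntegral_image_emb h2 (fun y => y) B]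
  exact ContinuousLinearMap.integral_comp_comm
    (R.toContinuousLinearEquiv : EuclideanSpace ℝ (Fin m) →L[ℝ] EuclideanSpace ℝ (Fin m)) hIB

lemma ctr_close {a b : ℝ} {u v : EuclideanSpace ℝ (Fin m)} (ha : 0 < a) (hb : |b - a| ≤ a/2) :
    ‖b⁻¹ • v - a⁻¹ • u‖ ≤ 2/a * ‖v - u‖ + 2/a^2 * |b - a| * ‖u‖ := by
  have hb1 := (abs_le.1 hb).1
  have hb2 : a/2 ≤ b := by linarith
  have hbpos : 0 < b := by linarith
  have key : b⁻¹ • v - a⁻¹ • u = b⁻¹ • (v - u) + (b⁻¹ - a⁻¹) • u := by module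
  rw [key]
  have h1 : ‖b⁻¹ • (v - u)‖ ≤ 2/a * ‖v - u‖ := by
    rw [norm_smul, Real.norm_eq_abs, abs_of_pos (inv_pos.mpr hbpos)]
    apply mul_le_mul_of_nonneg_right ?_ (norm_nonneg _)
    rw [inv_le_iff_one_le_mul₀ hbpos]
    rw [div_mul_eq_mul_div, le_div_iff₀ ha]
    linarith
  have h2 : ‖(b⁻¹ - a⁻¹) • u‖ ≤ 2/a^2 * |b - a| * ‖u‖ := by
    rw [norm_smul, Real.norm_eq_abs]
    apply mul_le_mul_of_nonneg_right ?_ (norm_nonneg _)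
    have heq : b⁻¹ - a⁻¹ = (a - b) / (a * b) := by
      field_simp
    rw [heq, abs_div, abs_of_pos (by positivity : (0:ℝ) < a * b), abs_sub_comm]
    rw [div_le_iff₀ (by positivity)]
    have hab : a^2/2 ≤ a * b := by nlinarith
    have h3 : 2/a^2 * (a^2/2) ≤ 2/a^2 * (a*b) := by
      apply mul_le_mul_of_nonneg_left hab (by positivity)
    have h4 : 2/a^2 * (a^2/2) = 1 := by field_simp
    calc |b - a| = |b - a| * 1 := by ring
      _ ≤ |b - a| * (2/a^2 * (a*b)) := by
          apply mul_le_mul_of_nonneg_left ?_ (abs_nonneg _)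
          rw [← h4]; exact h3
      _ = 2/a^2 * |b - a| * (a*b) := by ring
  calc ‖b⁻¹ • (v - u) + (b⁻¹ - a⁻¹) • u‖ ≤ ‖b⁻¹ • (v - u)‖ + ‖(b⁻¹ - a⁻¹) • u‖ := norm_add_le _ _
    _ ≤ 2/a * ‖v - u‖ + 2/a^2 * |b - a| * ‖u‖ := by linarith

set_option maxHeartbeats 2000000 in
lemma center_est (hm : 2 ≤ m) {K : Set (EuclideanSpace ℝ (Fin m))}
    (hKconv : Convex ℝ K) (hKcomp : IsCompact K)
    {ρ r : ℝ} (hρ : 0 < ρ) (hρr : ρ ≤ r)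
    (hball : ball 0 ρ ⊆ K) (hKr : K ⊆ closedBall 0 r)
    {u₀ : EuclideanSpace ℝ (Fin m)} (hu₀ : ‖u₀‖ = 1) {ε : ℝ} (hε : 0 < ε) :
    ∃ θ > 0, ∀ u : EuclideanSpace ℝ (Fin m), ‖u‖ = 1 → ‖u - u₀‖ < θ →
      ‖centerOfMass m K (hyp u) - centerOfMass m K (hyp u₀)‖ ≤ ε := by
  have hm1 : 1 ≤ m := le_trans (by norm_num) hm
  have hu₀ne : u₀ ≠ 0 := by intro h; rw [h, norm_zero] at hu₀; norm_num at hu₀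
  have hr0 : (0:ℝ) < r := lt_of_lt_of_le hρ hρr
  set μ := (μH[(m:ℝ)-1] : Measure (EuclideanSpace ℝ (Fin m))) with hμdef
  set S := K ∩ hyp u₀ with hSdef
  have hShyp : S ⊆ hyp u₀ := Set.inter_subset_right
  have hSbd : S ⊆ closedBall 0 r := fun x hx => hKr hx.1
  have hfinS : μ S < ⊤ := hyp_hausdorff_fin hm1 hu₀ne (Metric.isBounded_closedBall.subset hSbd) hShyp
  have hposS : (0:ℝ≥0∞) < μ S :=
    lt_of_lt_of_le (hyp_hausdorff_pos hm1 hu₀ne hρ) (measure_mono (fun x hx => ⟨hball hx.2, hx.1⟩))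
  set a := (μ S).toReal with hadef
  have ha : 0 < a := ENNReal.toReal_pos (ne_of_gt hposS) (ne_of_lt hfinS)
  set IS := (∫ x in S, x ∂μ) with hISdef
  set cS := a⁻¹ • IS with hcSdef
  set C := ((2:ℝ)^m + m) with hCdef
  have hC : 0 < C := by positivity
  set M := 8*r*C + 2*C*‖IS‖/a with hMdef
  have hM : 0 ≤ M := by positivity
  set δ := min (1/2) (min (1/(2*C)) (ε/(2*(M+1)))) with hδdef
  have hδ0 : 0 < δ := by
    apply lt_min (by norm_num)
    exact lt_min (by positivity) (by positivity)
  have hδhalf : δ ≤ 1/2 := min_le_left _ _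
  have hδC : δ ≤ 1/(2*C) := le_trans (min_le_right _ _) (min_le_left _ _)
  have hδM : δ ≤ ε/(2*(M+1)) := le_trans (min_le_right _ _) (min_le_right _ _)
  set θ := min (1/2) (min (δ*ρ/(16*r+1)) (ε/(2*(32*‖cS‖+1)))) with hθdef
  have hθ0 : 0 < θ := by
    apply lt_min (by norm_num)
    exact lt_min (by positivity) (by positivity)
  refine ⟨θ, hθ0, ?_⟩
  intro u hu hue
  have he2 : ‖u - u₀‖ ≤ 1/2 := le_of_lt (lt_of_lt_of_le hue (min_le_left _ _))
  have heθ1 : ‖u - u₀‖ < δ*ρ/(16*r+1) :=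
    lt_of_lt_of_le hue (le_trans (min_le_right _ _) (min_le_left _ _))
  have heθ2 : ‖u - u₀‖ < ε/(2*(32*‖cS‖+1)) :=
    lt_of_lt_of_le hue (le_trans (min_le_right _ _) (min_le_right _ _))
  set R := rot u₀ u with hRdef
  set A := ⇑R.symm '' K with hAdef
  have hAcomp : IsCompact A := hKcomp.image R.symm.continuous
  -- the key distance estimate
  have h16 : ∀ x : EuclideanSpace ℝ (Fin m), ‖x‖ ≤ r → 16 * ‖u - u₀‖ * ‖x‖ < δ * ρ := by
    intro x hx
    have h1 : 16 * ‖u - u₀‖ * ‖x‖ ≤ 16 * r * ‖u - u₀‖ := by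
      have := mul_le_mul_of_nonneg_left hx (by positivity : (0:ℝ) ≤ 16 * ‖u - u₀‖)
      nlinarith [norm_nonneg (u - u₀)]
    have h2 : (16*r+1) * ‖u - u₀‖ < δ * ρ := by
      rw [mul_comm]
      exact (lt_div_iff₀ (by positivity)).mp heθ1
    nlinarith [norm_nonneg (u - u₀)]
  have hA2 : A ⊆ (1+δ) • K := by
    rintro x ⟨k, hk, rfl⟩
    apply mem_one_add_smul hKconv hρ hball hδ0 hk
    calc ‖R.symm k - k‖ ≤ 16 * ‖u - u₀‖ * ‖k‖ := rot_symm_dist hu₀ hu he2 k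
      _ < δ * ρ := h16 k (by simpa [Metric.mem_closedBall, dist_zero_right] using hKr hk)
  have hA1 : (1-δ) • K ⊆ A := by
    rintro x ⟨k, hk, rfl⟩
    refine ⟨R ((1-δ) • k), ?_, R.symm_apply_apply _⟩
    apply mem_of_close_shrink hKconv hρ hball hδ0 (by linarith) hk
    have hnk : ‖(1-δ) • k‖ ≤ r := by
      rw [norm_smul, Real.norm_eq_abs, abs_of_pos (by linarith : (0:ℝ) < 1-δ)]
      have h1 : ‖k‖ ≤ r := by simpa [Metric.mem_closedBall, dist_zero_right] using hKr hk
      nlinarith [norm_nonneg k]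
    calc ‖R ((1-δ) • k) - (1-δ) • k‖ ≤ 16 * ‖u - u₀‖ * ‖(1-δ) • k‖ := rot_dist hu₀ hu he2 _
      _ < δ * ρ := h16 _ hnk
  set B := A ∩ hyp u₀ with hBdef
  have hBcomp : IsCompact B := hAcomp.inter_right (hyp_closed u₀)
  have hKhyp : K ∩ hyp u = ⇑R '' B := by
    rw [hBdef, Set.image_inter R.injective]
    have h2 : ⇑R '' A = K := by
      rw [hAdef, ← Set.image_comp]
      have : ⇑R ∘ ⇑R.symm = id := by
        funext z; simp
      rw [this, Set.image_id]
    have h3 : ⇑R '' hyp u₀ = hyp u := rot_image_hyp hu₀ hu he2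
    rw [h2, h3]
  -- boundedness of B
  have hAbd : A ⊆ closedBall 0 (2*r) := by
    intro x hx
    obtain ⟨k, hk, rfl⟩ := hA2 hx
    have h1 : ‖k‖ ≤ r := by simpa [Metric.mem_closedBall, dist_zero_right] using hKr hk
    simp only [Metric.mem_closedBall, dist_zero_right]
    rw [norm_smul, Real.norm_eq_abs, abs_of_pos (by linarith : (0:ℝ) < 1+δ)]
    nlinarith
  have hBhyp : B ⊆ hyp u₀ := Set.inter_subset_right
  have hBbd : B ⊆ closedBall 0 (2*r) := fun x hx => hAbd hx.1
  have hIntB : IntegrableOn (fun x => x) B μ :=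
    integrableOn_id hm1 hu₀ne hBcomp.measurableSet hBhyp hBbd
  set Vb := (μ B).toReal with hVbdef
  set Ib := (∫ x in B, x ∂μ) with hIbdef
  -- express the center of the u-section via R
  have hGu : centerOfMass m K (hyp u) = R (Vb⁻¹ • Ib) := by
    show (μH[(m:ℝ)-1] (K ∩ hyp u)).toReal⁻¹ • (∫ x in K ∩ hyp u, x ∂(μH[(m:ℝ)-1]))
      = R (Vb⁻¹ • Ib)
    rw [hKhyp, measure_image_isometry R B, integral_image_isometry R hIntB]
    rw [← R.map_smul]
  have hGu₀ : centerOfMass m K (hyp u₀) = cS := rfl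
  -- sandwich estimates
  obtain ⟨hV, hI⟩ := sandwich_est hm hKconv hKcomp hu₀ hρ hρr hball hKr hδ0 hδhalf hAcomp hA1 hA2
  rw [← hBdef, ← hVbdef, ← hCdef] at hV
  rw [← hBdef, ← hIbdef, ← hISdef, ← hCdef] at hI
  have hCδ : C * δ ≤ 1/2 := by
    have := mul_le_mul_of_nonneg_left hδC (le_of_lt hC)
    rwa [mul_one_div, mul_comm 2 C, ← div_div, div_self (ne_of_gt hC)] at this
  have hVhalf : |Vb - a| ≤ a/2 := by
    refine hV.trans ?_
    calc C * δ * a ≤ (1/2) * a := mul_le_mul_of_nonneg_right hCδ (le_of_lt ha)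
      _ = a/2 := by ring
  have hctr : ‖Vb⁻¹ • Ib - cS‖ ≤ 2/a * ‖Ib - IS‖ + 2/a^2 * |Vb - a| * ‖IS‖ := by
    rw [hcSdef]
    exact ctr_close ha hVhalf
  have hbound : ‖Vb⁻¹ • Ib - cS‖ ≤ M * δ := by
    have t1 : 2/a * ‖Ib - IS‖ ≤ 2/a * (4*r*(C * δ * a)) :=
      mul_le_mul_of_nonneg_left hI (by positivity)
    have t2 : 2/a^2 * |Vb - a| * ‖IS‖ ≤ 2/a^2 * (C * δ * a) * ‖IS‖ := by
      apply mul_le_mul_of_nonneg_right ?_ (norm_nonneg _)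
      exact mul_le_mul_of_nonneg_left hV (by positivity)
    have e1 : 2/a * (4*r*(C * δ * a)) = 8*r*C*δ := by field_simp; ring
    have e2 : 2/a^2 * (C * δ * a) * ‖IS‖ = (2*C*‖IS‖/a) * δ := by field_simp
    rw [e1] at t1
    rw [e2] at t2
    calc ‖Vb⁻¹ • Ib - cS‖ ≤ 2/a * ‖Ib - IS‖ + 2/a^2 * |Vb - a| * ‖IS‖ := hctr
      _ ≤ 8*r*C*δ + (2*C*‖IS‖/a) * δ := by linarith
      _ = M * δ := by rw [hMdef]; ring
  have hhalf1 : ‖Vb⁻¹ • Ib - cS‖ ≤ ε/2 := by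
    refine hbound.trans ?_
    have h1 : M * δ ≤ M * (ε/(2*(M+1))) := mul_le_mul_of_nonneg_left hδM hM
    have h2 : M * (ε/(2*(M+1))) ≤ ε/2 := by
      rw [mul_comm, div_mul_eq_mul_div, div_le_div_iff₀ (by positivity) (by norm_num : (0:ℝ) < 2)]
      nlinarith [mul_nonneg hε.le hM]
    linarith
  -- final triangle inequality
  rw [hGu, hGu₀]
  have hsplit : R (Vb⁻¹ • Ib) - cS = (R (Vb⁻¹ • Ib) - R cS) + (R cS - cS) := by abel
  rw [hsplit]
  have hn1 : ‖R (Vb⁻¹ • Ib) - R cS‖ = ‖Vb⁻¹ • Ib - cS‖ := by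
    rw [← R.map_sub, R.norm_map]
  have hn2 : ‖R cS - cS‖ ≤ ε/2 := by
    have h1 : ‖R cS - cS‖ ≤ 16 * ‖u - u₀‖ * ‖cS‖ := rot_dist hu₀ hu he2 cS
    have h2 : (2*(32*‖cS‖+1)) * ‖u - u₀‖ < ε := by
      rw [mul_comm]
      exact (lt_div_iff₀ (by positivity)).mp heθ2
    nlinarith [norm_nonneg (u - u₀), norm_nonneg cS]
  calc ‖(R (Vb⁻¹ • Ib) - R cS) + (R cS - cS)‖
      ≤ ‖R (Vb⁻¹ • Ib) - R cS‖ + ‖R cS - cS‖ := norm_add_le _ _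
    _ ≤ ε/2 + ε/2 := by rw [hn1]; exact add_le_add hhalf1 hn2
    _ = ε := by ring

end PartE


lemma contg (m : ℕ) (hm : 2 ≤ m) (K : Set (EuclideanSpace ℝ (Fin m)))
    (hKcomp : IsCompact K) (hKconv : Convex ℝ K)
    (hK0 : (0 : EuclideanSpace ℝ (Fin m)) ∈ interior K) :
    Continuous (fun v : {v : EuclideanSpace ℝ (Fin m) // v ≠ 0} =>
      centerOfMass m K (hyp v.1)) := by
  obtain ⟨ρ, hρ0, hball⟩ := Metric.mem_nhds_iff.mp (mem_interior_iff_mem_nhds.mp hK0)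
  obtain ⟨r0, hr0⟩ := hKcomp.isBounded.subset_closedBall 0
  set r := max r0 ρ with hrdef
  have hρr : ρ ≤ r := le_max_right _ _
  have hKr : K ⊆ closedBall 0 r :=
    hr0.trans (Metric.closedBall_subset_closedBall (le_max_left _ _))
  rw [continuous_iff_continuousAt]
  rintro ⟨w₀, hw₀⟩
  have hn0 : ‖w₀‖ ≠ 0 := norm_ne_zero_iff.mpr hw₀
  set u₀ := ‖w₀‖⁻¹ • w₀ with hu₀def
  have hu₀ : ‖u₀‖ = 1 := by
    rw [hu₀def, norm_smul, norm_inv, norm_norm, inv_mul_cancel₀ hn0]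
  set n : {v : EuclideanSpace ℝ (Fin m) // v ≠ 0} → EuclideanSpace ℝ (Fin m) :=
    fun v => ‖(v : EuclideanSpace ℝ (Fin m))‖⁻¹ • (v : EuclideanSpace ℝ (Fin m)) with hndef
  have hcont_n : ContinuousAt n ⟨w₀, hw₀⟩ := by
    apply ContinuousAt.smul (f := fun v : {v : EuclideanSpace ℝ (Fin m) // v ≠ 0} => ‖(v : EuclideanSpace ℝ (Fin m))‖⁻¹)
      (g := fun v : {v : EuclideanSpace ℝ (Fin m) // v ≠ 0} => (v : EuclideanSpace ℝ (Fin m)))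
    · exact (continuous_subtype_val.norm.continuousAt).inv₀ hn0
    · exact continuous_subtype_val.continuousAt
  have hnormn : ∀ v : {v : EuclideanSpace ℝ (Fin m) // v ≠ 0}, ‖n v‖ = 1 := by
    intro v
    rw [hndef]
    simp only
    rw [norm_smul, norm_inv, norm_norm, inv_mul_cancel₀ (norm_ne_zero_iff.mpr v.2)]
  have hhyp : ∀ v : {v : EuclideanSpace ℝ (Fin m) // v ≠ 0},
      hyp (v : EuclideanSpace ℝ (Fin m)) = hyp (n v) := by
    intro v
    rw [hndef]
    simp only
    rw [hyp_smul (inv_ne_zero (norm_ne_zero_iff.mpr v.2))]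
  rw [ContinuousAt, Metric.tendsto_nhds]
  intro ε hε
  obtain ⟨θ, hθ0, hth⟩ := center_est hm hKconv hKcomp hρ0 hρr hball hKr hu₀ (half_pos hε)
  have hnx₀ : n ⟨w₀, hw₀⟩ = u₀ := rfl
  have hev : ∀ᶠ v : {v : EuclideanSpace ℝ (Fin m) // v ≠ 0} in 𝓝 ⟨w₀, hw₀⟩,
      dist (n v) u₀ < θ := by
    have := Metric.tendsto_nhds.mp hcont_n θ hθ0
    rwa [hnx₀] at this
  filter_upwards [hev] with v hv
  rw [dist_eq_norm]
  have h1 : centerOfMass m K (hyp (v : EuclideanSpace ℝ (Fin m)))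
      = centerOfMass m K (hyp (n v)) := by rw [hhyp v]
  have h2 : centerOfMass m K (hyp w₀) = centerOfMass m K (hyp u₀) := by
    rw [hu₀def, hyp_smul (inv_ne_zero hn0)]
  show ‖centerOfMass m K (hyp (v : EuclideanSpace ℝ (Fin m))) - centerOfMass m K (hyp w₀)‖ < ε
  rw [h1, h2]
  have h3 := hth (n v) (hnormn v) (by rwa [dist_eq_norm] at hv)
  linarith [half_lt_self hε]


end CMass

/-- For a convex body `K ⊆ ℝ^m` with `0 ∈ int K` there is a continuous map
`f : ℝP^{m-1} → ℝ^m` such that any `k`-multiplicity of `f` yields `k` pairwise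
distinct linear hyperplanes whose centers of mass (of the sections of `K`) coincide. -/
theorem exists_map_linear_hyperplane_sections_of_convexBody
    (m : ℕ) (hm : 2 ≤ m) (K : Set (EuclideanSpace ℝ (Fin m)))
    (hKcomp : IsCompact K) (hKconv : Convex ℝ K) (hK0 : (0 : EuclideanSpace ℝ (Fin m)) ∈ interior K) :
    ∃ f : Projectivization ℝ (EuclideanSpace ℝ (Fin m)) → EuclideanSpace ℝ (Fin m),
      Continuous f ∧
        ∀ k : ℕ, 2 ≤ k →
          (∃ x : Fin k → Projectivization ℝ (EuclideanSpace ℝ (Fin m)),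
            Function.Injective x ∧ ∀ i j, f (x i) = f (x j)) →
          ∃ H : Fin k → Set (EuclideanSpace ℝ (Fin m)),
            Function.Injective H ∧
              (∀ i, IsLinearHyperplane (H i)) ∧
              ∀ i j, centerOfMass m K (H i) = centerOfMass m K (H j) := by
  have hg : ∀ (a b : {v : EuclideanSpace ℝ (Fin m) // v ≠ 0}) (t : ℝ), (a : EuclideanSpace ℝ (Fin m)) = t • (b : EuclideanSpace ℝ (Fin m)) →
      centerOfMass m K (CMass.hyp a.1) = centerOfMass m K (CMass.hyp b.1) := by
    rintro ⟨a, ha⟩ ⟨b, hb⟩ t hab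
    have ht : t ≠ 0 := by
      rintro rfl; simp at hab; exact ha hab
    simp only at hab ⊢
    rw [hab, CMass.hyp_smul ht]
  refine ⟨Projectivization.lift (fun v => centerOfMass m K (CMass.hyp v.1)) hg, ?_, ?_⟩
  · exact (CMass.contg m hm K hKcomp hKconv hK0).quotient_lift _
  · rintro k hk ⟨x, hxinj, hxeq⟩
    refine ⟨fun i => CMass.hyp (x i).rep, ?_, fun i => ⟨(x i).rep, (x i).rep_nonzero, rfl⟩, ?_⟩
    · intro i j hij
      apply hxinj
      obtain ⟨c, hc, hcw⟩ := CMass.hyp_inj (x i).rep_nonzero (x j).rep_nonzero hij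
      rw [← (x i).mk_rep, ← (x j).mk_rep]
      rw [Projectivization.mk_eq_mk_iff]
      refine ⟨Units.mk0 c⁻¹ (inv_ne_zero hc), ?_⟩
      simp [hcw, smul_smul, inv_mul_cancel₀ hc]
    · intro i j
      have hfi : ∀ i, Projectivization.lift (fun v => centerOfMass m K (CMass.hyp v.1)) hg (x i)
          = centerOfMass m K (CMass.hyp (x i).rep) := by
        intro i
        conv_lhs => rw [← (x i).mk_rep]
        rfl
      rw [← hfi i, ← hfi j, hxeq i j]
end
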